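/- arXiv:1709.04629 — 7 statements merged into one kernel-verified Lean document; each statement's English description precedes it below -/
import Mathlib

section
/- If h(z) = Σ a_n z^n and g(z) = Σ b_n z^n are analytic in the unit disk with |g'(z)| ≤ k|h'(z)| for all z in the disk and some k ∈ [0,1], then for all 0 ≤ r < 1, Σ_{n≥1} |b_n|² rⁿ ≤ k² Σ_{n≥1} |a_n|² rⁿ. -/
/-!
On the circle `|z| = ρ` the Fourier coefficients of `g'` are `(n+1) b_{n+1} ρⁿ`, so Parseval's
identity and the pointwise bound `|g'| ≤ k |h'|` give, with `u = ρ²`,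
`∑ (n+1)² |b_{n+1}|² uⁿ ≤ k² ∑ (n+1)² |a_{n+1}|² uⁿ` for all `u ∈ (0, 1)`. Integrating this over
`(0, t)` and dividing by `t` lowers the weight `(n+1)²` to `n+1`; integrating once more over
`(0, r)` removes it and produces `r^(n+1)`. The integrations are done termwise in `ℝ≥0∞`, where
no summability has to be checked; only the final passage back to `ℝ` needs it.
-/

open Metric Complex MeasureTheory Topology AddCircle Set

theorem Orthonormal.hasSum_norm_sq {𝕜 E ι : Type*} [RCLike 𝕜] [NormedAddCommGroup E]
    [InnerProductSpace 𝕜 E] {v : ι → E} (hv : Orthonormal 𝕜 v) {d : ι → 𝕜} {x : E}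
    (hx : HasSum (fun i => d i • v i) x) : HasSum (fun i => ‖d i‖ ^ 2) (‖x‖ ^ 2) := by
  have hsq (s : Finset ι) : ‖∑ i ∈ s, d i • v i‖ ^ 2 = ∑ i ∈ s, ‖d i‖ ^ 2 := by
    simpa using hv.orthogonalFamily.norm_sum d s
  have := ((continuous_norm.pow 2).tendsto x).comp hx
  simpa [HasSum, Function.comp_def, hsq] using this

section Fourier

variable {T : ℝ} [Fact (0 < T)]

theorem summable_smul_fourier {c : ℕ → ℂ} (hc : Summable (‖c ·‖)) :
    Summable fun n : ℕ => c n • fourier (T := T) n :=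
  .of_norm (by simpa [norm_smul, fourier_norm] using hc)

theorem hasSum_norm_sq_toLp_tsum_fourier {c : ℕ → ℂ} (hc : Summable (‖c ·‖)) :
    HasSum (fun n => ‖c n‖ ^ 2)
      (‖ContinuousMap.toLp 2 haarAddCircle ℂ (∑' n : ℕ, c n • fourier (T := T) n)‖ ^ 2) := by
  have hL2 := (ContinuousMap.toLp 2 (haarAddCircle (T := T)) ℂ).hasSum
    (summable_smul_fourier hc).hasSum
  simp only [map_smul] at hL2
  exact (orthonormal_fourier.comp _ Nat.cast_injective).hasSum_norm_sq hL2

theorem tsum_ofReal_norm_sq_le_of_norm_tsum_fourier_le {d e : ℕ → ℂ} (hd : Summable (‖d ·‖))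
    (he : Summable (‖e ·‖)) {k : ℝ}
    (hle : ∀ t : AddCircle T, ‖∑' n : ℕ, d n * fourier n t‖ ≤ k * ‖∑' n : ℕ, e n * fourier n t‖) :
    ∑' n, ENNReal.ofReal (‖d n‖ ^ 2) ≤
      ENNReal.ofReal (k ^ 2) * ∑' n, ENNReal.ofReal (‖e n‖ ^ 2) := by
  set toL2 : C(AddCircle T, ℂ) →L[ℂ] Lp ℂ 2 (haarAddCircle (T := T)) :=
    ContinuousMap.toLp 2 haarAddCircle ℂ
  have hpt (c : ℕ → ℂ) (hc : Summable (‖c ·‖)) :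
      ∀ᵐ t ∂haarAddCircle, toL2 (∑' n : ℕ, c n • fourier n) t = ∑' n : ℕ, c n * fourier n t := by
    filter_upwards [ContinuousMap.coeFn_toLp (p := 2) (𝕜 := ℂ) haarAddCircle
      (∑' n : ℕ, c n • fourier (T := T) n)] with t ht
    rw [ht, ← ContinuousMap.tsum_apply (summable_smul_fourier hc)]
    rfl
  have hnorm : ‖toL2 (∑' n : ℕ, d n • fourier n)‖ ≤ k * ‖toL2 (∑' n : ℕ, e n • fourier n)‖ :=
    Lp.norm_le_mul_norm_of_ae_le_mul <| by
      filter_upwards [hpt d hd, hpt e he] with t hdt het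
      rw [hdt, het]
      exact hle t
  have hd2 := hasSum_norm_sq_toLp_tsum_fourier (T := T) hd
  have he2 := hasSum_norm_sq_toLp_tsum_fourier (T := T) he
  rw [← ENNReal.ofReal_tsum_of_nonneg (fun _ => sq_nonneg _) hd2.summable,
    ← ENNReal.ofReal_tsum_of_nonneg (fun _ => sq_nonneg _) he2.summable, hd2.tsum_eq, he2.tsum_eq,
    ← ENNReal.ofReal_mul (sq_nonneg k), ← mul_pow]
  exact ENNReal.ofReal_le_ofReal (pow_le_pow_left₀ (norm_nonneg _) hnorm 2)

end Fourier

section Averaging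

variable {f g : ℕ → ℝ}

theorem setLIntegral_Ioc_ofReal_mul_pow {C : ℝ} (hC : 0 ≤ C) {t : ℝ} (ht : 0 ≤ t) (n : ℕ) :
    ∫⁻ s in Ioc 0 t, ENNReal.ofReal (C * s ^ n) =
      ENNReal.ofReal (C / (n + 1) * t ^ (n + 1)) := by
  have hint : IntegrableOn (fun s : ℝ => C * s ^ n) (Ioc 0 t) :=
    (continuous_const.mul (continuous_pow n)).integrableOn_Ioc
  have hpos : 0 ≤ᵐ[volume.restrict (Ioc 0 t)] fun s : ℝ => C * s ^ n :=
    (ae_restrict_iff' measurableSet_Ioc).2 <| .of_forall fun s hs =>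
      mul_nonneg hC (pow_nonneg hs.1.le n)
  rw [← ofReal_integral_eq_lintegral_ofReal hint hpos, ← intervalIntegral.integral_of_le ht,
    intervalIntegral.integral_const_mul, integral_pow]
  congr 1
  ring

theorem setLIntegral_Ioc_tsum_ofReal_mul_pow (hf : ∀ n, 0 ≤ f n) {t : ℝ} (ht : 0 ≤ t) :
    ∫⁻ s in Ioc 0 t, ∑' n, ENNReal.ofReal (f n * s ^ n) =
      ∑' n, ENNReal.ofReal (f n / (n + 1) * t ^ (n + 1)) := by
  rw [lintegral_tsum fun n => by fun_prop]
  exact tsum_congr fun n => setLIntegral_Ioc_ofReal_mul_pow (hf n) ht n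

variable {c : ENNReal} {R : ℝ}

theorem tsum_ofReal_div_succ_mul_pow_succ_le (hf : ∀ n, 0 ≤ f n) (hg : ∀ n, 0 ≤ g n)
    (hle : ∀ s ∈ Ioo 0 R,
      ∑' n, ENNReal.ofReal (f n * s ^ n) ≤ c * ∑' n, ENNReal.ofReal (g n * s ^ n)) :
    ∀ t ∈ Ico 0 R, ∑' n, ENNReal.ofReal (f n / (n + 1) * t ^ (n + 1)) ≤
      c * ∑' n, ENNReal.ofReal (g n / (n + 1) * t ^ (n + 1)) := by
  intro t ht
  rw [← setLIntegral_Ioc_tsum_ofReal_mul_pow hf ht.1,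
    ← setLIntegral_Ioc_tsum_ofReal_mul_pow hg ht.1, ← lintegral_const_mul _ (by fun_prop)]
  exact setLIntegral_mono' measurableSet_Ioc fun s hs => hle s ⟨hs.1, hs.2.trans_lt ht.2⟩

theorem tsum_ofReal_div_succ_mul_pow_le (hf : ∀ n, 0 ≤ f n) (hg : ∀ n, 0 ≤ g n)
    (hle : ∀ s ∈ Ioo 0 R,
      ∑' n, ENNReal.ofReal (f n * s ^ n) ≤ c * ∑' n, ENNReal.ofReal (g n * s ^ n)) :
    ∀ t ∈ Ioo 0 R, ∑' n, ENNReal.ofReal (f n / (n + 1) * t ^ n) ≤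
      c * ∑' n, ENNReal.ofReal (g n / (n + 1) * t ^ n) := by
  intro t ht
  have hmul (p : ℕ → ℝ) : ENNReal.ofReal t * ∑' n, ENNReal.ofReal (p n * t ^ n) =
      ∑' n, ENNReal.ofReal (p n * t ^ (n + 1)) := by
    rw [← ENNReal.tsum_mul_left]
    refine tsum_congr fun n => ?_
    rw [← ENNReal.ofReal_mul ht.1.le, pow_succ]
    congr 1
    ring
  rw [← ENNReal.mul_le_mul_iff_right (by simpa using ht.1) ENNReal.ofReal_ne_top, mul_left_comm,
    hmul, hmul]
  exact tsum_ofReal_div_succ_mul_pow_succ_le hf hg hle t ⟨ht.1.le, ht.2⟩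

end Averaging

theorem tsum_le_mul_tsum_of_tsum_ofReal_le {ι : Type*} {p q : ι → ℝ} (hp : ∀ i, 0 ≤ p i)
    (hq : ∀ i, 0 ≤ q i) (hq_sum : Summable q) {c : ℝ} (hc : 0 ≤ c)
    (h : ∑' i, ENNReal.ofReal (p i) ≤ ENNReal.ofReal c * ∑' i, ENNReal.ofReal (q i)) :
    ∑' i, p i ≤ c * ∑' i, q i := by
  rw [← ENNReal.ofReal_tsum_of_nonneg hq hq_sum, ← ENNReal.ofReal_mul hc] at h
  calc ∑' i, p i = (∑' i, ENNReal.ofReal (p i)).toReal := by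
        rw [ENNReal.tsum_toReal_eq fun _ => ENNReal.ofReal_ne_top]
        simp [ENNReal.toReal_ofReal, hp]
    _ ≤ c * ∑' i, q i := ENNReal.toReal_le_of_le_ofReal (mul_nonneg hc (tsum_nonneg hq)) h

section PowerSeries

variable {c : ℕ → ℂ}

theorem summable_norm_mul_pow_of_summable
    (hc : ∀ z ∈ ball (0 : ℂ) 1, Summable fun n => c n * z ^ n) {r : ℝ} (hr0 : 0 ≤ r)
    (hr1 : r < 1) : Summable fun n => ‖c n‖ * r ^ n := by
  set p := FormalMultilinearSeries.ofScalars ℂ c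
  have hrad : 1 ≤ p.radius := ENNReal.le_of_forall_nnreal_lt fun s hs =>
    p.le_radius_of_tendsto (l := 0) <| by
      have hs' : ((s : ℝ) : ℂ) ∈ ball (0 : ℂ) 1 := by simpa using hs
      simpa [p, FormalMultilinearSeries.ofScalars_norm] using (hc _ hs').tendsto_atTop_zero.norm
  have hr : (r.toNNReal : ENNReal) < p.radius := lt_of_lt_of_le (by simpa using hr1) hrad
  simpa [p, FormalMultilinearSeries.ofScalars_norm, hr0] using p.summable_norm_mul_pow hr

theorem summable_norm_sq_mul_pow_of_summable
    (hc : ∀ z ∈ ball (0 : ℂ) 1, Summable fun n => c n * z ^ n) {r : ℝ} (hr0 : 0 ≤ r)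
    (hr1 : r < 1) : Summable fun n => ‖c n‖ ^ 2 * r ^ n := by
  have h := summable_norm_mul_pow_of_summable hc (Real.sqrt_nonneg r)
    ((Real.sqrt_lt' one_pos).2 (by simpa using hr1))
  have hnonneg (n : ℕ) : 0 ≤ ‖c n‖ * √r ^ n := by positivity
  refine (h.mul_left (∑' n, ‖c n‖ * √r ^ n)).of_nonneg_of_le (fun n => by positivity) fun n => ?_
  calc ‖c n‖ ^ 2 * r ^ n = (‖c n‖ * √r ^ n) * (‖c n‖ * √r ^ n) := by
        rw [mul_mul_mul_comm, ← mul_pow, Real.mul_self_sqrt hr0, sq]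
    _ ≤ (∑' n, ‖c n‖ * √r ^ n) * (‖c n‖ * √r ^ n) :=
        mul_le_mul_of_nonneg_right (h.le_tsum n fun m _ => hnonneg m) (hnonneg n)

def derivCoeff (c : ℕ → ℂ) (n : ℕ) : ℂ := (n + 1) * c (n + 1)

theorem norm_derivCoeff_sq_div_succ_div_succ (c : ℕ → ℂ) (n : ℕ) :
    ‖derivCoeff c n‖ ^ 2 / (n + 1) / (n + 1) = ‖c (n + 1)‖ ^ 2 := by
  rw [derivCoeff, norm_mul, show ‖(n : ℂ) + 1‖ = n + 1 by norm_cast]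
  field_simp

theorem hasSum_derivCoeff_mul_pow {f : ℂ → ℂ}
    (hc : ∀ z ∈ ball (0 : ℂ) 1, HasSum (fun n => c n * z ^ n) (f z)) {z : ℂ}
    (hz : z ∈ ball (0 : ℂ) 1) : HasSum (fun n => derivCoeff c n * z ^ n) (deriv f z) := by
  rw [mem_ball_zero_iff] at hz
  obtain ⟨ρ, hzρ, hρ1⟩ := exists_between hz
  have hbound (n : ℕ) (w : ℂ) (hw : w ∈ ball (0 : ℂ) ρ) : ‖c n * w ^ n‖ ≤ ‖c n‖ * ρ ^ n := by
    rw [norm_mul, norm_pow]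
    exact mul_le_mul_of_nonneg_left
      (pow_le_pow_left₀ (norm_nonneg w) (mem_ball_zero_iff.1 hw).le n) (norm_nonneg _)
  have hsum := hasSum_deriv_of_summable_norm (F := fun n w => c n * w ^ n)
    (summable_norm_mul_pow_of_summable (fun w hw => (hc w hw).summable)
      ((norm_nonneg z).trans hzρ.le) hρ1)
    (fun n => by fun_prop) isOpen_ball hbound (mem_ball_zero_iff.2 hzρ)
  have hf : (fun w => ∑' n, c n * w ^ n) =ᶠ[𝓝 z] f := by
    filter_upwards [isOpen_ball.mem_nhds (mem_ball_zero_iff.2 hz)] with w hw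
    exact (hc w hw).tsum_eq
  rw [hf.deriv_eq] at hsum
  simp only [deriv_const_mul_field', deriv_pow_field] at hsum
  simpa [derivCoeff, mul_comm, mul_left_comm, mul_assoc] using (hasSum_nat_add_iff' 1).2 hsum

end PowerSeries

theorem tsum_ofReal_norm_derivCoeff_sq_le {a b : ℕ → ℂ} {h g : ℂ → ℂ} {k : ℝ}
    (ha : ∀ z ∈ ball (0 : ℂ) 1, HasSum (fun n => a n * z ^ n) (h z))
    (hb : ∀ z ∈ ball (0 : ℂ) 1, HasSum (fun n => b n * z ^ n) (g z))
    (hder : ∀ z ∈ ball (0 : ℂ) 1, ‖deriv g z‖ ≤ k * ‖deriv h z‖) {u : ℝ} (hu0 : 0 ≤ u)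
    (hu1 : u < 1) :
    ∑' n, ENNReal.ofReal (‖derivCoeff b n‖ ^ 2 * u ^ n) ≤
      ENNReal.ofReal (k ^ 2) * ∑' n, ENNReal.ofReal (‖derivCoeff a n‖ ^ 2 * u ^ n) := by
  set ρ := √u
  have hρ0 : 0 ≤ ρ := Real.sqrt_nonneg u
  have hρ1 : ρ < 1 := (Real.sqrt_lt' one_pos).2 (by simpa using hu1)
  have hz (t : AddCircle (1 : ℝ)) : (ρ : ℂ) * t.toCircle ∈ ball (0 : ℂ) 1 := by
    simpa [Circle.norm_coe, abs_of_nonneg hρ0] using hρ1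
  have hsummable {c : ℕ → ℂ} {f : ℂ → ℂ}
      (hc : ∀ z ∈ ball (0 : ℂ) 1, HasSum (fun n => c n * z ^ n) (f z)) :
      Summable fun n => ‖derivCoeff c n * ρ ^ n‖ := by
    simpa [norm_mul, norm_pow, abs_of_nonneg hρ0] using summable_norm_mul_pow_of_summable
      (fun z hz => (hasSum_derivCoeff_mul_pow hc hz).summable) hρ0 hρ1
  have hderiv {c : ℕ → ℂ} {f : ℂ → ℂ}
      (hc : ∀ z ∈ ball (0 : ℂ) 1, HasSum (fun n => c n * z ^ n) (f z)) (t : AddCircle (1 : ℝ)) :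
      ∑' n : ℕ, derivCoeff c n * ρ ^ n * fourier n t = deriv f (ρ * t.toCircle) := by
    rw [← (hasSum_derivCoeff_mul_pow hc (hz t)).tsum_eq]
    simp [fourier_apply, AddCircle.toCircle_nsmul, mul_pow, mul_assoc]
  have hparseval := tsum_ofReal_norm_sq_le_of_norm_tsum_fourier_le (hsummable hb)
    (hsummable ha) (k := k) fun t => by rw [hderiv hb, hderiv ha]; exact hder _ (hz t)
  have hsq (c : ℕ → ℂ) (n : ℕ) :
      ‖derivCoeff c n * ρ ^ n‖ ^ 2 = ‖derivCoeff c n‖ ^ 2 * u ^ n := by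
    rw [norm_mul, norm_pow, Complex.norm_real, Real.norm_of_nonneg hρ0, mul_pow, ← pow_mul,
      mul_comm n, pow_mul, Real.sq_sqrt hu0]
  simpa only [hsq] using hparseval

theorem bohr_stmt_0_general (a b : ℕ → ℂ) (h g : ℂ → ℂ) (k : ℝ)
    (ha : ∀ z ∈ ball (0:ℂ) 1, HasSum (fun n : ℕ => a n * z ^ n) (h z))
    (hb : ∀ z ∈ ball (0:ℂ) 1, HasSum (fun n : ℕ => b n * z ^ n) (g z))
    (hder : ∀ z ∈ ball (0:ℂ) 1, ‖deriv g z‖ ≤ k * ‖deriv h z‖)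
    (r : ℝ) (hr0 : 0 ≤ r) (hr1 : r < 1) :
    ∑' n : ℕ, ‖b (n + 1)‖^2 * r ^ (n + 1) ≤
      k ^ 2 * ∑' n : ℕ, ‖a (n + 1)‖^2 * r ^ (n + 1) := by
  have hderiv_le : ∀ u ∈ Ioo 0 1, ∑' n, ENNReal.ofReal (‖derivCoeff b n‖ ^ 2 * u ^ n) ≤
      ENNReal.ofReal (k ^ 2) * ∑' n, ENNReal.ofReal (‖derivCoeff a n‖ ^ 2 * u ^ n) :=
    fun u hu => tsum_ofReal_norm_derivCoeff_sq_le ha hb hder hu.1.le hu.2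
  have hcoeff_le := tsum_ofReal_div_succ_mul_pow_succ_le (fun _ => by positivity)
    (fun _ => by positivity) (tsum_ofReal_div_succ_mul_pow_le (fun _ => by positivity)
      (fun _ => by positivity) hderiv_le) r ⟨hr0, hr1⟩
  simp only [norm_derivCoeff_sq_div_succ_div_succ] at hcoeff_le
  exact tsum_le_mul_tsum_of_tsum_ofReal_le (fun _ => by positivity) (fun _ => by positivity)
    ((summable_nat_add_iff 1).2
      (summable_norm_sq_mul_pow_of_summable (fun z hz => (ha z hz).summable) hr0 hr1))
    (sq_nonneg k) hcoeff_le

theorem bohr_stmt_0 (a b : ℕ → ℂ) (h g : ℂ → ℂ) (k : ℝ)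
    (hk0 : 0 ≤ k) (hk1 : k ≤ 1)
    (hh : AnalyticOn ℂ h (ball (0:ℂ) 1))
    (hg : AnalyticOn ℂ g (ball (0:ℂ) 1))
    (ha : ∀ z ∈ ball (0:ℂ) 1, HasSum (fun n : ℕ => a n * z ^ n) (h z))
    (hb : ∀ z ∈ ball (0:ℂ) 1, HasSum (fun n : ℕ => b n * z ^ n) (g z))
    (hder : ∀ z ∈ ball (0:ℂ) 1, ‖deriv g z‖ ≤ k * ‖deriv h z‖)
    (r : ℝ) (hr0 : 0 ≤ r) (hr1 : r < 1) :
    ∑' n : ℕ, ‖b (n + 1)‖^2 * r ^ (n + 1) ≤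
      k ^ 2 * ∑' n : ℕ, ‖a (n + 1)‖^2 * r ^ (n + 1) :=
  bohr_stmt_0_general a b h g k ha hb hder r hr0 hr1
end

section
/- For each k ∈ [0,1) and each a ∈ (0,1), taking h(z) = (a - z)/(1 - a z) and g = λ k h with |λ| = 1, the Bohr sum satisfies Σ |a_n| rⁿ + Σ |b_n| rⁿ = a + (1-a²)(1+k) r/(1 - a r), and this quantity is ≥ 1 if and only if r ≥ 1/(1 + k + (2+k)a). -/
/-!
Both coefficient sequences are geometric from index 1 on: `‖a_n‖ = (1 - a²) aⁿ⁻¹` and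
`‖b_n‖ = k ‖a_n‖`, so the Bohr sum is `a` plus `(1 + k)` times a geometric series in `a r`.
The threshold comes from the factorisation
`a + (1 - a²)(1 + k) r / (1 - a r) - 1 = (1 - a) ((1 + k + (2 + k) a) r - 1) / (1 - a r)`.
-/

section

variable {a r : ℝ} {A : ℕ → ℂ}

lemma norm_coeff_succ
    (hAn : ∀ n : ℕ, 1 ≤ n → A n = -((1 - a ^ 2 : ℝ) : ℂ) * (a : ℂ) ^ (n - 1)) (n : ℕ) :
    ‖A (n + 1)‖ = |1 - a ^ 2| * |a| ^ n := by
  rw [hAn (n + 1) n.succ_pos, Nat.add_sub_cancel, norm_mul, norm_neg, norm_pow,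
    Complex.norm_real, Complex.norm_real, Real.norm_eq_abs, Real.norm_eq_abs]

lemma hasSum_norm_coeff_succ_mul_pow
    (hAn : ∀ n : ℕ, 1 ≤ n → A n = -((1 - a ^ 2 : ℝ) : ℂ) * (a : ℂ) ^ (n - 1))
    (hr0 : 0 ≤ r) (har : |a| * r < 1) :
    HasSum (fun n ↦ ‖A (n + 1)‖ * r ^ (n + 1)) (|1 - a ^ 2| * r / (1 - |a| * r)) := by
  have hterm : (fun n ↦ ‖A (n + 1)‖ * r ^ (n + 1))
      = fun n ↦ |1 - a ^ 2| * r * (|a| * r) ^ n := by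
    funext n
    rw [norm_coeff_succ hAn, mul_pow, pow_succ]
    ring
  rw [hterm, div_eq_mul_inv]
  exact (hasSum_geometric_of_lt_one (by positivity) har).mul_left _

lemma tsum_norm_coeff_mul_pow (hA0 : A 0 = (a : ℂ))
    (hAn : ∀ n : ℕ, 1 ≤ n → A n = -((1 - a ^ 2 : ℝ) : ℂ) * (a : ℂ) ^ (n - 1))
    (hr0 : 0 ≤ r) (har : |a| * r < 1) :
    ∑' n, ‖A n‖ * r ^ n = |a| + |1 - a ^ 2| * r / (1 - |a| * r) := by
  have htail := hasSum_norm_coeff_succ_mul_pow hAn hr0 har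
  rw [tsum_eq_zero_add' (f := fun n ↦ ‖A n‖ * r ^ n) htail.summable, htail.tsum_eq, hA0, Complex.norm_real, Real.norm_eq_abs,
    pow_zero, mul_one]

end

lemma norm_unimodular_mul {lam : ℂ} (hlam : ‖lam‖ = 1) (k : ℝ) (z : ℂ) :
    ‖lam * (k : ℂ) * z‖ = |k| * ‖z‖ := by
  rw [norm_mul, norm_mul, hlam, one_mul, Complex.norm_real, Real.norm_eq_abs]

lemma bohr_sum_sub_one {a k r : ℝ} (har : a * r ≠ 1) :
    a + (1 - a ^ 2) * (1 + k) * r / (1 - a * r) - 1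
      = (1 - a) * ((1 + k + (2 + k) * a) * r - 1) / (1 - a * r) := by
  have : 1 - a * r ≠ 0 := sub_ne_zero.mpr (Ne.symm har)
  field_simp
  ring

lemma one_le_bohr_sum_iff {a k r : ℝ} (hk0 : 0 ≤ k) (ha0 : 0 ≤ a) (ha1 : a < 1)
    (har : a * r < 1) :
    1 ≤ a + (1 - a ^ 2) * (1 + k) * r / (1 - a * r) ↔ 1 / (1 + k + (2 + k) * a) ≤ r := by
  have hT : 0 < 1 + k + (2 + k) * a := by positivity
  rw [← sub_nonneg, bohr_sum_sub_one har.ne, le_div_iff₀ (sub_pos.mpr har), zero_mul,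
    mul_nonneg_iff_of_pos_left (sub_pos.mpr ha1), sub_nonneg, div_le_iff₀ hT, mul_comm]

theorem bohr_stmt_4_general (k a : ℝ) (hk0 : 0 ≤ k)
    (ha0 : 0 < a) (ha1 : a < 1) (lam : ℂ) (hlam : ‖lam‖ = 1)
    (A B : ℕ → ℂ)
    (hA0 : A 0 = (a : ℂ))
    (hAn : ∀ n : ℕ, 1 ≤ n → A n = -((1 - a ^ 2 : ℝ) : ℂ) * (a : ℂ) ^ (n - 1))
    (hB : ∀ n : ℕ, B n = lam * (k : ℂ) * A n)
    (r : ℝ) (hr0 : 0 ≤ r) (hr1 : r < 1) :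
    ((∑' n : ℕ, ‖A n‖ * r ^ n) +
        ∑' n : ℕ, ‖B (n + 1)‖ * r ^ (n + 1)
      = a + (1 - a ^ 2) * (1 + k) * r / (1 - a * r)) ∧
    (1 ≤ (∑' n : ℕ, ‖A n‖ * r ^ n) +
        ∑' n : ℕ, ‖B (n + 1)‖ * r ^ (n + 1)
      ↔ 1 / (1 + k + (2 + k) * a) ≤ r) := by
  have har : a * r < 1 := by nlinarith
  have habs : |a| = a := abs_of_pos ha0
  have hc : |1 - a ^ 2| = 1 - a ^ 2 := abs_of_nonneg (by nlinarith)
  have hsumA := tsum_norm_coeff_mul_pow hA0 hAn hr0 (by rwa [habs])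
  have hsumB : ∑' n, ‖B (n + 1)‖ * r ^ (n + 1) = k * ((1 - a ^ 2) * r / (1 - a * r)) := by
    simp_rw [hB, norm_unimodular_mul hlam, mul_assoc, tsum_mul_left,
      (hasSum_norm_coeff_succ_mul_pow hAn hr0 (by rwa [habs])).tsum_eq, habs, hc, abs_of_nonneg hk0]
  have hsum : (∑' n, ‖A n‖ * r ^ n) + ∑' n, ‖B (n + 1)‖ * r ^ (n + 1)
      = a + (1 - a ^ 2) * (1 + k) * r / (1 - a * r) := by
    rw [hsumA, hsumB, habs, hc]
    ring
  rw [hsum]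
  exact ⟨rfl, one_le_bohr_sum_iff hk0 ha0.le ha1 har⟩

theorem bohr_stmt_4 (k a : ℝ) (hk0 : 0 ≤ k) (hk1 : k < 1)
    (ha0 : 0 < a) (ha1 : a < 1) (lam : ℂ) (hlam : ‖lam‖ = 1)
    (A B : ℕ → ℂ)
    (hA0 : A 0 = (a : ℂ))
    (hAn : ∀ n : ℕ, 1 ≤ n → A n = -((1 - a ^ 2 : ℝ) : ℂ) * (a : ℂ) ^ (n - 1))
    (hB : ∀ n : ℕ, B n = lam * (k : ℂ) * A n)
    (r : ℝ) (hr0 : 0 ≤ r) (hr1 : r < 1) :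
    ((∑' n : ℕ, ‖A n‖ * r ^ n) +
        ∑' n : ℕ, ‖B (n + 1)‖ * r ^ (n + 1)
      = a + (1 - a ^ 2) * (1 + k) * r / (1 - a * r)) ∧
    (1 ≤ (∑' n : ℕ, ‖A n‖ * r ^ n) +
        ∑' n : ℕ, ‖B (n + 1)‖ * r ^ (n + 1)
      ↔ 1 / (1 + k + (2 + k) * a) ≤ r) :=
  bohr_stmt_4_general k a hk0 ha0 ha1 lam hlam A B hA0 hAn hB r hr0 hr1
end

section
/- Let p ≥ 1 and r^p ≤ 1/3. If h(z) = Σ_{n≥0} a_{pn+1} z^{pn+1} is analytic with |h| ≤ 1 on the unit disk, then Σ_{n≥0} |a_{pn+1}| r^{pn+1} ≤ max{2r^{p+1}, r}. -/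
/-!
On the circle `|z| = ρ < 1` the Fourier coefficients of `θ ↦ h (ρ e^{iθ})` are `c k ρ^(pk+1)` at
the frequencies `pk + 1` and vanish at all frequencies `≤ 0`. Pairing `h · (v₀ + v₁ e^{ipnθ})`
with `w₀ e^{iθ} + w₁ e^{i(pn+1)θ}` and using `|h| ≤ 1` together with Parseval for these two-term
polynomials shows that the Toeplitz matrix `!![c 0 ρ, 0; c n ρ^(pn+1), c 0 ρ]` is a contraction,
which forces `‖c n‖ ρ^(pn+1) ≤ 1 - ‖c 0‖² ρ²`. Letting `ρ → 1` gives Wiener's inequality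
`‖c n‖ ≤ 1 - ‖c 0‖²` for `n ≥ 1`, so the sum is at most
`‖c 0‖ r + (1 - ‖c 0‖²) r^(p+1) / (1 - r^p) ≤ ‖c 0‖ r + (1 - ‖c 0‖²) r / 2 ≤ r`.
-/

open Metric Complex Real Filter Topology intervalIntegral ComplexConjugate

noncomputable def fourierExp (n : ℤ) (θ : ℝ) : ℂ := exp (n * θ * I)

@[fun_prop]
lemma continuous_fourierExp (n : ℤ) : Continuous (fourierExp n) := by
  unfold fourierExp
  fun_prop

lemma norm_fourierExp (n : ℤ) (θ : ℝ) : ‖fourierExp n θ‖ = 1 := by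
  rw [fourierExp, show (n : ℂ) * θ * I = ((n * θ : ℝ) : ℂ) * I by push_cast; ring]
  exact norm_exp_ofReal_mul_I _

lemma fourierExp_zero (θ : ℝ) : fourierExp 0 θ = 1 := by
  simp [fourierExp]

lemma fourierExp_mul_fourierExp (m n : ℤ) (θ : ℝ) :
    fourierExp m θ * fourierExp n θ = fourierExp (m + n) θ := by
  rw [fourierExp, fourierExp, fourierExp, ← Complex.exp_add]
  push_cast
  ring_nf

lemma conj_fourierExp (n : ℤ) (θ : ℝ) : conj (fourierExp n θ) = fourierExp (-n) θ := by
  rw [fourierExp, fourierExp, ← Complex.exp_conj]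
  simp

lemma integral_fourierExp {n : ℤ} (hn : n ≠ 0) : ∫ θ in (0 : ℝ)..2 * π, fourierExp n θ = 0 := by
  have hnI : (n : ℂ) * I ≠ 0 := by simp [hn, I_ne_zero]
  simp_rw [fourierExp, mul_right_comm _ _ I]
  rw [integral_exp_mul_complex hnI,
    show (n : ℂ) * I * ↑(2 * π) = n * (2 * π * I) by push_cast; ring, exp_int_mul_two_pi_mul_I]
  simp

lemma integral_fourierExp_zero : ∫ θ in (0 : ℝ)..2 * π, fourierExp 0 θ = 2 * π := by
  simp [fourierExp_zero]

section Coefficients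

variable {a : ℕ → ℂ} {ν : ℕ → ℤ} {u : ℝ → ℂ}

lemma hasSum_integral_mul_fourierExp (ha : Summable fun k => ‖a k‖)
    (hu : ∀ θ, HasSum (fun k => a k * fourierExp (ν k) θ) (u θ)) (m : ℤ) :
    HasSum (fun k => a k * ∫ θ in (0 : ℝ)..2 * π, fourierExp (ν k - m) θ)
      (∫ θ in (0 : ℝ)..2 * π, u θ * fourierExp (-m) θ) := by
  have : HasSum (fun k => ∫ θ in (0 : ℝ)..2 * π, a k * fourierExp (ν k) θ * fourierExp (-m) θ)
      (∫ θ in (0 : ℝ)..2 * π, u θ * fourierExp (-m) θ) :=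
    hasSum_integral_of_dominated_convergence (fun k _ => ‖a k‖)
      (fun k => (by fun_prop : Continuous fun θ => a k * fourierExp (ν k) θ * fourierExp (-m) θ)
        |>.aestronglyMeasurable)
      (fun k => .of_forall fun θ _ => by simp [norm_fourierExp])
      (.of_forall fun _ _ => ha) intervalIntegrable_const
      (.of_forall fun θ _ => (hu θ).mul_right (fourierExp (-m) θ))
  simpa only [mul_assoc, fourierExp_mul_fourierExp, intervalIntegral.integral_const_mul,
    ← sub_eq_add_neg] using this

lemma integral_mul_fourierExp_eq_zero (ha : Summable fun k => ‖a k‖)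
    (hu : ∀ θ, HasSum (fun k => a k * fourierExp (ν k) θ) (u θ)) {m : ℤ} (hm : ∀ k, ν k ≠ m) :
    ∫ θ in (0 : ℝ)..2 * π, u θ * fourierExp (-m) θ = 0 := by
  have := hasSum_integral_mul_fourierExp ha hu m
  simp only [integral_fourierExp (sub_ne_zero.2 (hm _)), mul_zero] at this
  exact this.unique hasSum_zero

lemma integral_mul_fourierExp_eq (ha : Summable fun k => ‖a k‖)
    (hu : ∀ θ, HasSum (fun k => a k * fourierExp (ν k) θ) (u θ)) (hν : ν.Injective) (k : ℕ) :
    ∫ θ in (0 : ℝ)..2 * π, u θ * fourierExp (-ν k) θ = 2 * π * a k := by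
  have := hasSum_integral_mul_fourierExp ha hu (ν k)
  refine this.unique ?_
  convert hasSum_ite_eq k (2 * π * a k) using 2 with j
  split_ifs with hj
  · rw [hj, sub_self, integral_fourierExp_zero, mul_comm]
  · rw [integral_fourierExp (sub_ne_zero.2 (hν.ne hj)), mul_zero]

end Coefficients

lemma summable_norm_mul_pow_of_summable_s10 {a : ℕ → ℂ} {ν : ℕ → ℕ} (hν : ∀ k, k ≤ ν k) {z : ℂ}
    (hz : Summable fun k => a k * z ^ ν k) {s : ℝ} (hs0 : 0 ≤ s) (hs : s < ‖z‖) :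
    Summable fun k => ‖a k‖ * s ^ ν k := by
  have hz0 : 0 < ‖z‖ := hs0.trans_lt hs
  obtain ⟨C, hC⟩ := (hz.tendsto_atTop_zero.norm.bddAbove_range :
    BddAbove (Set.range fun k => ‖a k * z ^ ν k‖))
  set q := s / ‖z‖
  have hq0 : 0 ≤ q := by positivity
  have hq1 : q < 1 := (div_lt_one hz0).2 hs
  refine .of_nonneg_of_le (fun k => by positivity) (fun k => ?_)
    ((summable_geometric_of_lt_one hq0 hq1).mul_left C)
  calc ‖a k‖ * s ^ ν k = ‖a k * z ^ ν k‖ * q ^ ν k := by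
        rw [norm_mul, norm_pow, div_pow, mul_assoc, mul_div_cancel₀ _ (by positivity)]
    _ ≤ C * q ^ k :=
        mul_le_mul (hC ⟨k, rfl⟩) (pow_le_pow_of_le_one hq0 hq1.le (hν k)) (by positivity)
          ((norm_nonneg _).trans (hC ⟨k, rfl⟩))

lemma integral_norm_sq_add_fourierExp {m n : ℤ} (hmn : m ≠ n) (a b : ℂ) :
    ∫ θ in (0 : ℝ)..2 * π, ‖a * fourierExp m θ + b * fourierExp n θ‖ ^ 2
      = 2 * π * (‖a‖ ^ 2 + ‖b‖ ^ 2) := by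
  apply ofReal_injective
  rw [← intervalIntegral.integral_ofReal]
  have hexpand : ∀ θ, ((‖a * fourierExp m θ + b * fourierExp n θ‖ ^ 2 : ℝ) : ℂ)
      = (‖a‖ ^ 2 + ‖b‖ ^ 2 : ℂ) + (a * conj b) * fourierExp (m - n) θ
        + (b * conj a) * fourierExp (n - m) θ := by
    intro θ
    have hm := fourierExp_mul_fourierExp m (-m) θ
    have hn := fourierExp_mul_fourierExp n (-n) θ
    rw [add_neg_cancel, fourierExp_zero] at hm hn
    push_cast
    rw [← mul_conj', ← mul_conj', ← mul_conj']
    simp only [map_add, map_mul, conj_fourierExp, sub_eq_add_neg, ← fourierExp_mul_fourierExp]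
    linear_combination (a * conj a) * hm + (b * conj b) * hn
  simp_rw [hexpand]
  rw [integral_add (Continuous.intervalIntegrable (by fun_prop) _ _)
      (Continuous.intervalIntegrable (by fun_prop) _ _),
    integral_add intervalIntegrable_const (Continuous.intervalIntegrable (by fun_prop) _ _),
    integral_const, integral_const_mul, integral_const_mul,
    integral_fourierExp (sub_ne_zero.2 hmn), integral_fourierExp (sub_ne_zero.2 hmn.symm),
    real_smul]
  push_cast
  ring

lemma two_mul_norm_integral_mul_conj_le {u φ ψ : ℝ → ℂ} (hu1 : ∀ θ, ‖u θ‖ ≤ 1)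
    (hφ : Continuous φ) (hψ : Continuous ψ) :
    2 * ‖∫ θ in (0 : ℝ)..2 * π, u θ * φ θ * conj (ψ θ)‖
      ≤ (∫ θ in (0 : ℝ)..2 * π, ‖φ θ‖ ^ 2) + ∫ θ in (0 : ℝ)..2 * π, ‖ψ θ‖ ^ 2 := by
  have hle : ‖∫ θ in (0 : ℝ)..2 * π, u θ * φ θ * conj (ψ θ)‖
      ≤ ∫ θ in (0 : ℝ)..2 * π, (‖φ θ‖ ^ 2 + ‖ψ θ‖ ^ 2) / 2 := by
    refine norm_integral_le_of_norm_le (by positivity) (.of_forall fun θ _ => ?_)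
      (Continuous.intervalIntegrable (by fun_prop) _ _)
    rw [norm_mul, norm_mul, RCLike.norm_conj]
    nlinarith [hu1 θ, norm_nonneg (u θ), mul_nonneg (norm_nonneg (φ θ)) (norm_nonneg (ψ θ)),
      sq_nonneg (‖φ θ‖ - ‖ψ θ‖)]
  rw [intervalIntegral.integral_div, integral_add (Continuous.intervalIntegrable (by fun_prop) _ _)
    (Continuous.intervalIntegrable (by fun_prop) _ _)] at hle
  linarith

/-- The form `⟪w, T v⟫` of the lower triangular Toeplitz matrix `T = !![A, 0; B, A]`. -/
def toeplitzForm (A B v₀ v₁ w₀ w₁ : ℂ) : ℂ := conj w₀ * (A * v₀) + conj w₁ * (B * v₀ + A * v₁)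

lemma two_mul_norm_toeplitzForm_le {u : ℝ → ℂ} (hu : Continuous u) (hu1 : ∀ θ, ‖u θ‖ ≤ 1) {N : ℤ}
    (hN : N ≠ 0) {A B : ℂ} (hA : ∫ θ in (0 : ℝ)..2 * π, u θ * fourierExp (-1) θ = 2 * π * A)
    (hB : ∫ θ in (0 : ℝ)..2 * π, u θ * fourierExp (-(N + 1)) θ = 2 * π * B)
    (h0 : ∫ θ in (0 : ℝ)..2 * π, u θ * fourierExp (-(1 - N)) θ = 0) (v₀ v₁ w₀ w₁ : ℂ) :
    2 * ‖toeplitzForm A B v₀ v₁ w₀ w₁‖ ≤ ‖v₀‖ ^ 2 + ‖v₁‖ ^ 2 + ‖w₀‖ ^ 2 + ‖w₁‖ ^ 2 := by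
  set φ := fun θ => v₀ * fourierExp 0 θ + v₁ * fourierExp N θ
  set ψ := fun θ => w₀ * fourierExp 1 θ + w₁ * fourierExp (N + 1) θ
  have hexpand : ∀ θ, u θ * φ θ * conj (ψ θ)
      = (conj w₀ * v₀ + conj w₁ * v₁) * (u θ * fourierExp (-1) θ)
        + conj w₁ * v₀ * (u θ * fourierExp (-(N + 1)) θ)
        + conj w₀ * v₁ * (u θ * fourierExp (-(1 - N)) θ) := by
    intro θ
    have h₁ : fourierExp N θ * fourierExp (-1) θ = fourierExp (-(1 - N)) θ := by
      rw [fourierExp_mul_fourierExp]; ring_nf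
    have h₂ : fourierExp N θ * fourierExp (-(N + 1)) θ = fourierExp (-1) θ := by
      rw [fourierExp_mul_fourierExp]; ring_nf
    simp only [φ, ψ, map_add, map_mul, conj_fourierExp, fourierExp_zero]
    linear_combination (u θ * v₁ * conj w₀) * h₁ + (u θ * v₁ * conj w₁) * h₂
  have hintegral : ∫ θ in (0 : ℝ)..2 * π, u θ * φ θ * conj (ψ θ)
      = 2 * π * toeplitzForm A B v₀ v₁ w₀ w₁ := by
    simp_rw [hexpand]
    rw [integral_add (Continuous.intervalIntegrable (by fun_prop) _ _)
        (Continuous.intervalIntegrable (by fun_prop) _ _),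
      integral_add (Continuous.intervalIntegrable (by fun_prop) _ _)
        (Continuous.intervalIntegrable (by fun_prop) _ _),
      integral_const_mul, integral_const_mul, integral_const_mul, hA, hB, h0, toeplitzForm]
    ring
  have hφ : ∫ θ in (0 : ℝ)..2 * π, ‖φ θ‖ ^ 2 = 2 * π * (‖v₀‖ ^ 2 + ‖v₁‖ ^ 2) :=
    integral_norm_sq_add_fourierExp hN.symm v₀ v₁
  have hψ : ∫ θ in (0 : ℝ)..2 * π, ‖ψ θ‖ ^ 2 = 2 * π * (‖w₀‖ ^ 2 + ‖w₁‖ ^ 2) :=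
    integral_norm_sq_add_fourierExp (by omega) w₀ w₁
  have := two_mul_norm_integral_mul_conj_le hu1 (by fun_prop : Continuous φ)
    (by fun_prop : Continuous ψ)
  simp only [hintegral, hφ, hψ, norm_mul, Complex.norm_ofNat, norm_real,
    Real.norm_of_nonneg pi_pos.le] at this
  nlinarith [pi_pos]

lemma le_one_sub_sq_of_two_mul_le {a b : ℝ}
    (H : ∀ x y s t : ℝ, 2 * (s * (a * x) + t * (b * x + a * y)) ≤ x ^ 2 + y ^ 2 + s ^ 2 + t ^ 2) :
    b ≤ 1 - a ^ 2 := by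
  have h₁ := H 1 0 a b
  -- `(s, t)` is the image of `(x, y)` under `!![a, 0; b, a]`, and `(x, y)` is extremal when
  -- `b = 1 - a ^ 2`.
  have h₂ := H (1 - a ^ 2) (a * b) (a * (1 - a ^ 2)) b
  have hd : b ^ 2 ≤ 1 - a ^ 2 := by nlinarith
  have hprod : (1 - a ^ 2) * ((b - (1 - a ^ 2)) * (b + (1 - a ^ 2))) ≤ 0 := by nlinarith
  by_contra! hlt
  have hpos : 0 < (b - (1 - a ^ 2)) * (b + (1 - a ^ 2)) :=
    mul_pos (by linarith) (by nlinarith)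
  nlinarith

lemma norm_le_one_sub_sq_of_two_mul_norm_toeplitzForm_le {A B : ℂ}
    (H : ∀ v₀ v₁ w₀ w₁ : ℂ,
      2 * ‖toeplitzForm A B v₀ v₁ w₀ w₁‖ ≤ ‖v₀‖ ^ 2 + ‖v₁‖ ^ 2 + ‖w₀‖ ^ 2 + ‖w₁‖ ^ 2) :
    ‖B‖ ≤ 1 - ‖A‖ ^ 2 := by
  set σ := exp (arg A * I)
  set τ := exp (arg B * I)
  have hσ : conj σ * σ = 1 := by rw [conj_mul', norm_exp_ofReal_mul_I]; simp
  have hτ : conj τ * τ = 1 := by rw [conj_mul', norm_exp_ofReal_mul_I]; simp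
  have hA : A = ‖A‖ * σ := (norm_mul_exp_arg_mul_I A).symm
  have hB : B = ‖B‖ * τ := (norm_mul_exp_arg_mul_I B).symm
  refine le_one_sub_sq_of_two_mul_le fun x y s t => ?_
  have hphase : toeplitzForm A B x (y * τ * conj σ) (s * σ) (t * τ)
      = ((s * (‖A‖ * x) + t * (‖B‖ * x + ‖A‖ * y) : ℝ) : ℂ) := by
    unfold toeplitzForm
    conv_lhs => rw [hA, hB]
    simp only [map_mul, conj_ofReal]
    push_cast
    linear_combination (s * ‖A‖ * x + t * ‖A‖ * y * (conj τ * τ)) * hσ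
      + (t * ‖B‖ * x + t * ‖A‖ * y) * hτ
  have hunit : ∀ z : ℂ, z = σ ∨ z = τ → ‖z‖ = 1 := by
    rintro z (rfl | rfl) <;> exact norm_exp_ofReal_mul_I _
  have := H x (y * τ * conj σ) (s * σ) (t * τ)
  simp only [hphase, norm_mul, norm_real, Real.norm_eq_abs, RCLike.norm_conj,
    hunit σ (.inl rfl), hunit τ (.inr rfl), mul_one, sq_abs] at this
  linarith [le_abs_self (s * (‖A‖ * x) + t * (‖B‖ * x + ‖A‖ * y))]

lemma circleMap_mem_ball_one {ρ : ℝ} (hρ0 : 0 ≤ ρ) (hρ1 : ρ < 1) (θ : ℝ) :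
    circleMap 0 ρ θ ∈ ball (0 : ℂ) 1 := by
  simpa [norm_circleMap_zero, abs_of_nonneg hρ0] using hρ1

section LacunarySeries

variable {p : ℕ} {c : ℕ → ℂ} {h : ℂ → ℂ}
  (hc : ∀ z ∈ ball (0 : ℂ) 1, HasSum (fun n : ℕ => c n * z ^ (p * n + 1)) (h z))
include hc

lemma summable_norm_mul_pow (hp : 1 ≤ p) {ρ : ℝ} (hρ0 : 0 ≤ ρ) (hρ1 : ρ < 1) :
    Summable fun k => ‖c k‖ * ρ ^ (p * k + 1) := by
  have hρ' : 0 ≤ (1 + ρ) / 2 := by linarith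
  refine summable_norm_mul_pow_of_summable_s10 (fun k => by nlinarith)
    (hc _ (circleMap_mem_ball_one hρ' (by linarith) 0)).summable hρ0 ?_
  rw [norm_circleMap_zero, abs_of_nonneg hρ']
  linarith

lemma hasSum_circleMap {ρ : ℝ} (hρ0 : 0 ≤ ρ) (hρ1 : ρ < 1) (θ : ℝ) :
    HasSum (fun k => c k * ρ ^ (p * k + 1) * fourierExp (p * k + 1 : ℕ) θ)
      (h (circleMap 0 ρ θ)) := by
  convert hc _ (circleMap_mem_ball_one hρ0 hρ1 θ) using 2 with k
  rw [circleMap_zero, mul_pow, fourierExp, ← Complex.exp_nat_mul, mul_assoc]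
  push_cast
  ring_nf

lemma norm_mul_pow_le_one_sub_sq (hp : 1 ≤ p) (hh : AnalyticOn ℂ h (ball 0 1))
    (hb : ∀ z ∈ ball (0 : ℂ) 1, ‖h z‖ ≤ 1) {ρ : ℝ} (hρ0 : 0 ≤ ρ) (hρ1 : ρ < 1) {n : ℕ}
    (hn : 1 ≤ n) : ‖c n‖ * ρ ^ (p * n + 1) ≤ 1 - (‖c 0‖ * ρ) ^ 2 := by
  have hmem := circleMap_mem_ball_one hρ0 hρ1
  have hu : Continuous fun θ => h (circleMap 0 ρ θ) :=
    hh.continuousOn.comp_continuous (continuous_circleMap 0 ρ) hmem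
  have ha : Summable fun k => ‖c k * ρ ^ (p * k + 1)‖ := by
    simpa [abs_of_nonneg hρ0] using summable_norm_mul_pow hc hp hρ0 hρ1
  have hν : (fun k : ℕ => ((p * k + 1 : ℕ) : ℤ)).Injective := fun k l hkl => by
    simpa [Nat.pos_iff_ne_zero.1 hp] using hkl
  have hcoeff := integral_mul_fourierExp_eq ha (hasSum_circleMap hc hρ0 hρ1) hν
  have H := two_mul_norm_toeplitzForm_le hu (fun θ => hb _ (hmem θ)) (N := (p * n : ℕ))
    (Nat.cast_ne_zero.2 (Nat.mul_ne_zero (by omega) (by omega)))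
    (A := c 0 * ρ ^ (p * 0 + 1)) (B := c n * ρ ^ (p * n + 1)) (by simpa using hcoeff 0)
    (by simpa using hcoeff n)
    (integral_mul_fourierExp_eq_zero ha (hasSum_circleMap hc hρ0 hρ1) fun k => by
      have := Nat.mul_pos hp hn; omega)
  simpa [abs_of_nonneg hρ0] using norm_le_one_sub_sq_of_two_mul_norm_toeplitzForm_le H

lemma norm_le_one_sub_sq (hp : 1 ≤ p) (hh : AnalyticOn ℂ h (ball 0 1))
    (hb : ∀ z ∈ ball (0 : ℂ) 1, ‖h z‖ ≤ 1) {n : ℕ} (hn : 1 ≤ n) : ‖c n‖ ≤ 1 - ‖c 0‖ ^ 2 := by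
  have hlim : ∀ f : ℝ → ℝ, Continuous f → Tendsto f (𝓝[<] 1) (𝓝 (f 1)) :=
    fun f hf => hf.continuousWithinAt
  have hleft := hlim (fun ρ => ‖c n‖ * ρ ^ (p * n + 1)) (by fun_prop)
  have hright := hlim (fun ρ => 1 - (‖c 0‖ * ρ) ^ 2) (by fun_prop)
  simp only [one_pow, mul_one] at hleft hright
  refine le_of_tendsto_of_tendsto hleft hright ?_
  filter_upwards [Ioo_mem_nhdsLT zero_lt_one] with ρ hρ
  exact norm_mul_pow_le_one_sub_sq hc hp hh hb hρ.1.le hρ.2 hn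

end LacunarySeries

lemma tsum_mul_pow_le_of_le_one_sub_sq {p : ℕ} {a : ℕ → ℝ} (ha : ∀ n, 0 ≤ a n)
    (hwiener : ∀ n, 1 ≤ n → a n ≤ 1 - a 0 ^ 2) {r : ℝ} (hr0 : 0 ≤ r) (hr : r ^ p ≤ 1 / 3) :
    ∑' n, a n * r ^ (p * n + 1) ≤ r := by
  set q := r ^ p
  have hq0 : 0 ≤ q := by positivity
  have hq1 : q < 1 := by linarith
  have ha0 : a 0 ^ 2 ≤ 1 := by linarith [ha 1, hwiener 1 le_rfl]
  have htail_le : ∀ k, a (k + 1) * r ^ (p * (k + 1) + 1) ≤ (1 - a 0 ^ 2) * (r * q) * q ^ k := by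
    intro k
    rw [show r ^ (p * (k + 1) + 1) = r * q * q ^ k by
      rw [← pow_mul, ← pow_succ', ← pow_add]; ring_nf]
    exact (mul_le_mul_of_nonneg_right (hwiener (k + 1) (by omega)) (by positivity)).trans_eq
      (by ring)
  have hgeom := (hasSum_geometric_of_lt_one hq0 hq1).mul_left ((1 - a 0 ^ 2) * (r * q))
  have htail :=
    Summable.of_nonneg_of_le (fun k => mul_nonneg (ha _) (by positivity)) htail_le hgeom.summable
  have hq : q * (1 - q)⁻¹ ≤ 1 / 2 := by
    rw [← div_eq_mul_inv, div_le_iff₀ (by linarith)]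
    linarith
  rw [((summable_nat_add_iff (f := fun n => a n * r ^ (p * n + 1)) 1).1 htail).tsum_eq_zero_add]
  calc a 0 * r ^ (p * 0 + 1) + ∑' k, a (k + 1) * r ^ (p * (k + 1) + 1)
      ≤ a 0 * r + (1 - a 0 ^ 2) * (r * q) * (1 - q)⁻¹ := by
        simpa using hasSum_le htail_le htail.hasSum hgeom
    _ = a 0 * r + (1 - a 0 ^ 2) * r * (q * (1 - q)⁻¹) := by ring
    _ ≤ a 0 * r + (1 - a 0 ^ 2) * r * (1 / 2) := by gcongr
    _ ≤ r := by nlinarith [sq_nonneg (1 - a 0)]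

theorem bohr_stmt_10_general (p : ℕ) (hp : 1 ≤ p) (r : ℝ) (hr0 : 0 ≤ r)
    (hr3 : r ^ p ≤ 1 / 3)
    (c : ℕ → ℂ) (h : ℂ → ℂ)
    (hh : AnalyticOn ℂ h (ball (0:ℂ) 1))
    (hc : ∀ z ∈ ball (0:ℂ) 1, HasSum (fun n : ℕ => c n * z ^ (p * n + 1)) (h z))
    (hb : ∀ z ∈ ball (0:ℂ) 1, ‖h z‖ ≤ 1) :
    ∑' n : ℕ, ‖c n‖ * r ^ (p * n + 1) ≤ max (2 * r ^ (p + 1)) r :=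
  (tsum_mul_pow_le_of_le_one_sub_sq (fun n => norm_nonneg (c n))
    (fun _ hn => norm_le_one_sub_sq hc hp hh hb hn) hr0 hr3).trans (le_max_right _ _)

theorem bohr_stmt_10 (p : ℕ) (hp : 1 ≤ p) (r : ℝ) (hr0 : 0 ≤ r) (hr1 : r < 1)
    (hr3 : r ^ p ≤ 1 / 3)
    (c : ℕ → ℂ) (h : ℂ → ℂ)
    (hh : AnalyticOn ℂ h (ball (0:ℂ) 1))
    (hc : ∀ z ∈ ball (0:ℂ) 1, HasSum (fun n : ℕ => c n * z ^ (p * n + 1)) (h z))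
    (hb : ∀ z ∈ ball (0:ℂ) 1, ‖h z‖ ≤ 1) :
    ∑' n : ℕ, ‖c n‖ * r ^ (p * n + 1) ≤ max (2 * r ^ (p + 1)) r :=
  bohr_stmt_10_general p hp r hr0 hr3 c h hh hc hb
end

section
/- Let p ≥ 2. If h(z) = Σ_{n≥0} a_n z^{pn+1} and g(z) = Σ_{n≥0} b_n z^{pn+1} are analytic in the unit disk with ‖h‖_∞ ≤ 1 and ‖g‖_∞ ≤ 1, then Σ_{n≥0} (|a_n| + |b_n|) r^{pn+1} ≤ 1 for r ≤ 1/2, and the constant 1/2 is sharp (extremal f(z) = z + conj(z), i.e., h(z) = g(z) = z). -/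
/-!
Since `h 0 = 0`, Schwarz's lemma bounds `h z / z = ∑ aₙ z^(pn)` by `1`. Averaging it over the
`pn`-th roots of unity and extracting a root shows that `u ↦ ∑ₖ a_(kn) uᵏ` is also bounded by `1`,
so the Schwarz–Pick lemma at the origin gives Wiener's inequality `‖aₙ‖ ≤ 1 - ‖a₀‖²` for `n ≥ 1`.
For `r ≤ 1/2` we have `rᵖ ≤ 1/4`, and summing the geometric tail gives
`∑ ‖aₙ‖ r^(pn+1) ≤ r (‖a₀‖ + (1 - ‖a₀‖²) / 3) ≤ r ≤ 1/2`; the same holds for `g`.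
For `h = g = id` the sum is `2ρ`.
-/

open Metric Complex

open Set ComplexConjugate Filter Topology Finset

theorem norm_sub_le_norm_one_sub_conj_mul {z c : ℂ} (hz : ‖z‖ ≤ 1) (hc : ‖c‖ ≤ 1) :
    ‖z - c‖ ≤ ‖1 - conj c * z‖ := by
  have key : ‖1 - conj c * z‖ ^ 2 - ‖z - c‖ ^ 2 = (1 - ‖z‖ ^ 2) * (1 - ‖c‖ ^ 2) := by
    simp only [Complex.sq_norm, Complex.normSq_apply, Complex.sub_re, Complex.sub_im,
      Complex.mul_re, Complex.mul_im, Complex.one_re, Complex.one_im, Complex.conj_re,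
      Complex.conj_im]
    ring
  have : 0 ≤ (1 - ‖z‖ ^ 2) * (1 - ‖c‖ ^ 2) := by
    apply mul_nonneg <;> nlinarith [norm_nonneg z, norm_nonneg c]
  nlinarith [norm_nonneg (z - c), norm_nonneg (1 - conj c * z)]

theorem deriv_eq_zero_of_isLocalMax_norm {f : ℂ → ℂ} {c : ℂ}
    (hd : ∀ᶠ z in 𝓝 c, DifferentiableAt ℂ f z) (hc : IsLocalMax (norm ∘ f) c) : deriv f c = 0 := by
  have hconst : f =ᶠ[𝓝 c] fun _ => f c := eventually_eq_of_isLocalMax_norm hd hc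
  rw [hconst.deriv_eq, deriv_const]

/-- Schwarz–Pick at the origin: compose with the automorphism moving `Φ 0` to `0`, unless
`‖Φ 0‖ = 1`, in which case `Φ` is constant by the maximum modulus principle. -/
theorem norm_deriv_zero_le_one_sub_sq {Φ : ℂ → ℂ} (hd : DifferentiableOn ℂ Φ (ball 0 1))
    (hmaps : MapsTo Φ (ball 0 1) (closedBall 0 1)) : ‖deriv Φ 0‖ ≤ 1 - ‖Φ 0‖ ^ 2 := by
  have h0 : (0 : ℂ) ∈ ball (0 : ℂ) 1 := mem_ball_self one_pos
  have hΦ : ∀ w ∈ ball (0 : ℂ) 1, ‖Φ w‖ ≤ 1 := fun w hw => mem_closedBall_zero_iff.mp (hmaps hw)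
  have hc1 : ‖Φ 0‖ ≤ 1 := hΦ 0 h0
  generalize hc0 : Φ 0 = c at hc1 ⊢
  rcases hc1.lt_or_eq with hc | hc
  · have hden : ∀ w ∈ ball (0 : ℂ) 1, 1 - conj c * Φ w ≠ 0 := by
      refine fun w hw h => (?_ : ¬ ‖conj c * Φ w‖ = 1) (by rw [← sub_eq_zero.mp h, norm_one])
      rw [norm_mul, RCLike.norm_conj]
      nlinarith [hΦ w hw, norm_nonneg c, norm_nonneg (Φ w)]
    set ψ : ℂ → ℂ := fun w => (Φ w - c) / (1 - conj c * Φ w)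
    have hψd : DifferentiableOn ℂ ψ (ball 0 1) :=
      (hd.sub_const c).div ((hd.const_mul _).const_sub 1) hden
    have hψmaps : MapsTo ψ (ball 0 1) (closedBall (ψ 0) 1) := by
      intro w hw
      simp only [ψ, hc0, sub_self, zero_div, mem_closedBall_zero_iff, norm_div]
      exact div_le_one_of_le₀ (norm_sub_le_norm_one_sub_conj_mul (hΦ w hw) hc.le) (norm_nonneg _)
    have hΦ' : HasDerivAt Φ (deriv Φ 0) 0 :=
      (hd.differentiableAt (ball_mem_nhds 0 one_pos)).hasDerivAt
    have hψ' : HasDerivAt ψ (deriv Φ 0 / (1 - ‖c‖ ^ 2 : ℝ)) 0 := by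
      refine ((hΦ'.sub_const c).div ((hΦ'.const_mul (conj c)).const_sub 1)
        (hden 0 h0)).congr_deriv ?_
      have : 1 - conj c * c ≠ 0 := hc0 ▸ hden 0 h0
      rw [Complex.conj_mul'] at this
      rw [hc0, Complex.conj_mul']
      push_cast
      field_simp
      ring
    have hpos : 0 < 1 - ‖c‖ ^ 2 := by nlinarith [norm_nonneg c]
    have := norm_deriv_le_one_of_mapsTo_ball hψd hψmaps one_pos
    rwa [hψ'.deriv, norm_div, Complex.norm_real, Real.norm_of_nonneg hpos.le,
      div_le_one hpos] at this
  · rw [deriv_eq_zero_of_isLocalMax_norm ?_ ?_, norm_zero, hc]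
    · norm_num
    · filter_upwards [ball_mem_nhds (0 : ℂ) one_pos] with w hw
      exact hd.differentiableAt (isOpen_ball.mem_nhds hw)
    · filter_upwards [ball_mem_nhds (0 : ℂ) one_pos] with w hw
      simpa [hc0, hc] using hΦ w hw

theorem hasFPowerSeriesOnBall_ofScalars_of_hasSum {c : ℕ → ℂ} {F : ℂ → ℂ}
    (hF : ∀ w ∈ ball (0 : ℂ) 1, HasSum (fun n => c n * w ^ n) (F w)) :
    HasFPowerSeriesOnBall F (FormalMultilinearSeries.ofScalars ℂ c) 0 1 := by
  refine ⟨ENNReal.le_of_forall_nnreal_lt fun r hr => ?_, one_pos, fun {y} hy => ?_⟩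
  · refine FormalMultilinearSeries.le_radius_of_summable_norm _ ?_
    have hr : ((r : ℝ) : ℂ) ∈ ball (0 : ℂ) 1 := by simpa using hr
    simpa [FormalMultilinearSeries.ofScalars_norm] using (hF _ hr).summable.norm
  · rw [← ENNReal.coe_one, Metric.eball_coe, NNReal.coe_one] at hy
    simpa [FormalMultilinearSeries.ofScalars_apply_eq, mul_comm] using hF y hy

theorem norm_coeff_one_le_one_sub_sq {c : ℕ → ℂ} {F : ℂ → ℂ}
    (hF : ∀ w ∈ ball (0 : ℂ) 1, HasSum (fun n => c n * w ^ n) (F w))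
    (hb : ∀ w ∈ ball (0 : ℂ) 1, w ≠ 0 → ‖F w‖ ≤ 1) : ‖c 1‖ ≤ 1 - ‖c 0‖ ^ 2 := by
  have hps := hasFPowerSeriesOnBall_ofScalars_of_hasSum hF
  have hF0 : c 0 = F 0 := by simpa using hps.hasFPowerSeriesAt.coeff_zero (fun _ => 0)
  have hF'0 : deriv F 0 = c 1 := by
    simp [hps.hasFPowerSeriesAt.deriv]
  have hd : DifferentiableOn ℂ F (ball 0 1) := by
    simpa [← ENNReal.coe_one, Metric.eball_coe] using hps.differentiableOn
  have hb0 : ‖F 0‖ ≤ 1 := by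
    refine le_of_tendsto (hps.hasFPowerSeriesAt.continuousAt.norm.tendsto.mono_left
      (nhdsWithin_le_nhds (s := {0}ᶜ))) ?_
    filter_upwards [self_mem_nhdsWithin, nhdsWithin_le_nhds (ball_mem_nhds (0 : ℂ) one_pos)]
      with w hw0 hw using hb w hw hw0
  have hmaps : MapsTo F (ball 0 1) (closedBall 0 1) := by
    intro w hw
    rw [mem_closedBall_zero_iff]
    rcases eq_or_ne w 0 with rfl | hw0
    exacts [hb0, hb w hw hw0]
  simpa [← hF0, hF'0] using norm_deriv_zero_le_one_sub_sq hd hmaps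

theorem IsPrimitiveRoot.geom_sum_pow_eq_ite {K : Type*} [Field K] {ζ : K} {N : ℕ}
    (hζ : IsPrimitiveRoot ζ N) (m : ℕ) :
    ∑ j ∈ range N, (ζ ^ m) ^ j = if N ∣ m then (N : K) else 0 := by
  split_ifs with hm
  · simp [(hζ.pow_eq_one_iff_dvd m).mpr hm]
  · have hne : ζ ^ m ≠ 1 := fun h => hm ((hζ.pow_eq_one_iff_dvd m).mp h)
    rw [geom_sum_eq hne, ← pow_mul, mul_comm, pow_mul, hζ.pow_eq_one, one_pow, sub_self, zero_div]

theorem hasSum_ite_dvd_of_hasSum_rotate {ζ : ℂ} {N : ℕ} (hζ : IsPrimitiveRoot ζ N) (hN : N ≠ 0)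
    {c : ℕ → ℂ} {e : ℕ → ℕ} {F : ℂ → ℂ} {v : ℂ}
    (hF : ∀ j, HasSum (fun k => c k * (ζ ^ j * v) ^ e k) (F (ζ ^ j * v))) :
    HasSum (fun k => if N ∣ e k then c k * v ^ e k else 0)
      ((N : ℂ)⁻¹ * ∑ j ∈ range N, F (ζ ^ j * v)) := by
  have hterm : ∀ k, (if N ∣ e k then c k * v ^ e k else 0) =
      (N : ℂ)⁻¹ * ∑ j ∈ range N, c k * (ζ ^ j * v) ^ e k := fun k => by
    have hpow : ∀ j, c k * (ζ ^ j * v) ^ e k = (ζ ^ e k) ^ j * (c k * v ^ e k) := fun j => by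
      rw [mul_pow, ← pow_mul, ← pow_mul, mul_comm j]
      ring
    rw [Finset.sum_congr rfl fun j _ => hpow j, ← Finset.sum_mul, hζ.geom_sum_pow_eq_ite]
    split_ifs <;> simp [hN]
  simp_rw [hterm]
  exact (hasSum_sum fun j _ => hF j).mul_left _

theorem exists_pow_eq_of_mem_ball {u : ℂ} (hu : u ∈ ball (0 : ℂ) 1) (hu0 : u ≠ 0) {N : ℕ}
    (hN : N ≠ 0) : ∃ v ∈ ball (0 : ℂ) 1, v ≠ 0 ∧ v ^ N = u := by
  have hv : (u ^ (N⁻¹ : ℂ)) ^ N = u := cpow_nat_inv_pow u hN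
  refine ⟨u ^ (N⁻¹ : ℂ), ?_, fun h => hu0 (by rw [← hv, h, zero_pow hN]), hv⟩
  rw [mem_ball_zero_iff, ← hv, norm_pow] at hu
  exact mem_ball_zero_iff.mpr ((pow_lt_one_iff_of_nonneg (norm_nonneg _) hN).mp hu)

/-- Averaging `G` over the `qn`-th roots of unity keeps exactly the terms with `n ∣ k`; the
substitution `u = v ^ (qn)` turns them into a power series in `u`. -/
theorem exists_hasSum_coeff_mul_of_hasSum_pow_mul {q n : ℕ} (hq : q ≠ 0) (hn : n ≠ 0)
    {a : ℕ → ℂ} {G : ℂ → ℂ} {B : ℝ}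
    (hG : ∀ z ∈ ball (0 : ℂ) 1, z ≠ 0 → HasSum (fun k => a k * z ^ (q * k)) (G z))
    (hGb : ∀ z ∈ ball (0 : ℂ) 1, z ≠ 0 → ‖G z‖ ≤ B) {u : ℂ} (hu : u ∈ ball (0 : ℂ) 1)
    (hu0 : u ≠ 0) : ∃ A, HasSum (fun k => a (k * n) * u ^ k) A ∧ ‖A‖ ≤ B := by
  have hN : q * n ≠ 0 := mul_ne_zero hq hn
  obtain ⟨v, hv1, hv0, hv⟩ := exists_pow_eq_of_mem_ball hu hu0 hN
  obtain ⟨ζ, hζ⟩ : ∃ ζ : ℂ, IsPrimitiveRoot ζ (q * n) := ⟨_, isPrimitiveRoot_exp _ hN⟩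
  have hrot : ∀ j : ℕ, ζ ^ j * v ∈ ball (0 : ℂ) 1 ∧ ζ ^ j * v ≠ 0 := fun j => by
    have : ‖ζ‖ = 1 := hζ.norm'_eq_one hN
    refine ⟨?_, mul_ne_zero (pow_ne_zero _ (hζ.ne_zero hN)) hv0⟩
    simpa [this] using hv1
  set A := ((q * n : ℕ) : ℂ)⁻¹ * ∑ j ∈ range (q * n), G (ζ ^ j * v)
  have havg : HasSum _ A := hasSum_ite_dvd_of_hasSum_rotate hζ hN (e := (q * ·))
    fun j => hG _ (hrot j).1 (hrot j).2
  have hinj : Function.Injective (· * n) := mul_left_injective₀ hn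
  have hdvd : ∀ m, q * n ∣ q * m ↔ n ∣ m := fun m =>
    Nat.mul_dvd_mul_iff_left (Nat.pos_of_ne_zero hq)
  have hsub := (hinj.hasSum_iff fun m hm =>
    if_neg fun h => hm ⟨m / n, Nat.div_mul_cancel ((hdvd m).mp h)⟩).mpr havg
  refine ⟨A, ?_, ?_⟩
  · convert hsub using 1
    funext k
    simp [hdvd, ← hv, ← pow_mul, mul_comm, mul_left_comm]
  · rw [norm_mul, norm_inv, Complex.norm_natCast, inv_mul_le_iff₀ (by positivity)]
    calc ‖∑ j ∈ range (q * n), G (ζ ^ j * v)‖ ≤ ∑ j ∈ range (q * n), ‖G (ζ ^ j * v)‖ :=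
          norm_sum_le _ _
      _ ≤ ∑ _j ∈ range (q * n), B := sum_le_sum fun j _ => hGb _ (hrot j).1 (hrot j).2
      _ = (q * n : ℕ) * B := by simp

theorem norm_coeff_le_one_sub_sq_of_hasSum_pow_mul {q : ℕ} (hq : q ≠ 0) {a : ℕ → ℂ}
    {G : ℂ → ℂ} (hG : ∀ z ∈ ball (0 : ℂ) 1, z ≠ 0 → HasSum (fun k => a k * z ^ (q * k)) (G z))
    (hGb : ∀ z ∈ ball (0 : ℂ) 1, z ≠ 0 → ‖G z‖ ≤ 1) {n : ℕ} (hn : n ≠ 0) :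
    ‖a n‖ ≤ 1 - ‖a 0‖ ^ 2 := by
  have hsub := fun u (hu : u ∈ ball (0 : ℂ) 1) (hu0 : u ≠ 0) =>
    exists_hasSum_coeff_mul_of_hasSum_pow_mul hq hn hG hGb hu hu0
  have hF : ∀ u ∈ ball (0 : ℂ) 1,
      HasSum (fun k => a (k * n) * u ^ k) (∑' k, a (k * n) * u ^ k) := by
    intro u hu
    rcases eq_or_ne u 0 with rfl | hu0
    · exact (hasSum_single 0 fun k hk => by simp [hk]).summable.hasSum
    · obtain ⟨A, hA, -⟩ := hsub u hu hu0
      exact hA.summable.hasSum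
  have hFb : ∀ u ∈ ball (0 : ℂ) 1, u ≠ 0 → ‖∑' k, a (k * n) * u ^ k‖ ≤ 1 := by
    intro u hu hu0
    obtain ⟨A, hA, hAb⟩ := hsub u hu hu0
    rwa [hA.tsum_eq]
  simpa using norm_coeff_one_le_one_sub_sq hF hFb

theorem tsum_norm_mul_pow_le_half {p : ℕ} (hp : 2 ≤ p) {a : ℕ → ℂ}
    (ha : ∀ n ≠ 0, ‖a n‖ ≤ 1 - ‖a 0‖ ^ 2) {r : ℝ} (hr0 : 0 ≤ r) (hr : r ≤ 1 / 2)
    (hsum : Summable fun n => ‖a n‖ * r ^ (p * n + 1)) :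
    ∑' n, ‖a n‖ * r ^ (p * n + 1) ≤ 1 / 2 := by
  set t := ‖a 0‖
  have ht : 0 ≤ 1 - t ^ 2 := (norm_nonneg _).trans (ha 1 one_ne_zero)
  have hrp : r ^ p ≤ 1 / 4 := calc
    r ^ p ≤ (1 / 2) ^ p := by gcongr
    _ ≤ (1 / 2) ^ 2 := pow_le_pow_of_le_one (by norm_num) (by norm_num) hp
    _ = 1 / 4 := by norm_num
  have hrp0 : 0 ≤ r ^ p := by positivity
  have hterm : ∀ m : ℕ,
      ‖a (m + 1)‖ * r ^ (p * (m + 1) + 1) ≤ (1 - t ^ 2) * r ^ (p + 1) * (r ^ p) ^ m := fun m => by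
      rw [mul_assoc, ← pow_mul, ← pow_add, show p + 1 + p * m = p * (m + 1) + 1 by ring]
      exact mul_le_mul_of_nonneg_right (ha _ m.succ_ne_zero) (by positivity)
  have hgeom : Summable fun m : ℕ => (1 - t ^ 2) * r ^ (p + 1) * (r ^ p) ^ m :=
    (summable_geometric_of_lt_one hrp0 (by linarith)).mul_left _
  calc ∑' n, ‖a n‖ * r ^ (p * n + 1)
      = t * r + ∑' m : ℕ, ‖a (m + 1)‖ * r ^ (p * (m + 1) + 1) := by
        rw [hsum.tsum_eq_zero_add]
        simp [t]
    _ ≤ t * r + ∑' m : ℕ, (1 - t ^ 2) * r ^ (p + 1) * (r ^ p) ^ m := by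
        grw [((summable_nat_add_iff 1).mpr hsum).tsum_le_tsum hterm hgeom]
    _ = r * (t + (1 - t ^ 2) * (r ^ p / (1 - r ^ p))) := by
        rw [tsum_mul_left, tsum_geometric_of_lt_one hrp0 (by linarith), pow_succ]
        field_simp
        ring
    _ ≤ r * (t + (1 - t ^ 2) * (1 / 3)) := by
        have : r ^ p / (1 - r ^ p) ≤ 1 / 3 := by
          rw [div_le_iff₀ (by linarith)]
          linarith
        gcongr
    _ ≤ 1 / 2 := by
        have ht1 : t ≤ 1 := by nlinarith [norm_nonneg (a 0)]
        have : t + (1 - t ^ 2) * (1 / 3) ≤ 1 := by nlinarith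
        nlinarith

theorem summable_norm_mul_pow_of_summable_s11 {a : ℕ → ℂ} {e : ℕ → ℕ} {r : ℝ} (hr : 0 ≤ r)
    (hs : Summable fun n => a n * (r : ℂ) ^ e n) : Summable fun n => ‖a n‖ * r ^ e n := by
  simpa [abs_of_nonneg hr] using hs.norm

theorem tsum_norm_mul_pow_le_half_of_norm_le_one {p : ℕ} (hp : 2 ≤ p) {a : ℕ → ℂ} {h : ℂ → ℂ}
    (hh : DifferentiableOn ℂ h (ball 0 1))
    (hs : ∀ z ∈ ball (0 : ℂ) 1, HasSum (fun n => a n * z ^ (p * n + 1)) (h z))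
    (hb : ∀ z ∈ ball (0 : ℂ) 1, ‖h z‖ ≤ 1) {r : ℝ} (hr0 : 0 ≤ r) (hr : r ≤ 1 / 2) :
    ∑' n, ‖a n‖ * r ^ (p * n + 1) ≤ 1 / 2 := by
  have hh0 : h 0 = 0 := (hs 0 (mem_ball_self one_pos)).unique (by simp)
  have hG : ∀ z ∈ ball (0 : ℂ) 1, z ≠ 0 → HasSum (fun n => a n * z ^ (p * n)) (h z / z) :=
    fun z hz hz0 => by simpa [pow_succ, mul_div_assoc, hz0] using (hs z hz).div_const z
  have hGb : ∀ z ∈ ball (0 : ℂ) 1, z ≠ 0 → ‖h z / z‖ ≤ 1 := fun z hz hz0 => by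
    rw [norm_div, div_le_one (norm_pos_iff.mpr hz0)]
    exact norm_le_norm_of_mapsTo_ball hh (fun w hw => mem_closedBall_zero_iff.mpr (hb w hw)) hh0
      (mem_ball_zero_iff.mp hz)
  have hr1 : (r : ℂ) ∈ ball (0 : ℂ) 1 := by
    simpa [abs_of_nonneg hr0] using hr.trans_lt (by norm_num)
  exact tsum_norm_mul_pow_le_half hp (a := a)
    (fun n hn => norm_coeff_le_one_sub_sq_of_hasSum_pow_mul (by omega) hG hGb hn) hr0 hr
    (summable_norm_mul_pow_of_summable_s11 hr0 (hs _ hr1).summable)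

theorem bohr_stmt_11 (p : ℕ) (hp : 2 ≤ p) :
    (∀ (a b : ℕ → ℂ) (h g : ℂ → ℂ),
      AnalyticOn ℂ h (ball (0:ℂ) 1) → AnalyticOn ℂ g (ball (0:ℂ) 1) →
      (∀ z ∈ ball (0:ℂ) 1, HasSum (fun n : ℕ => a n * z ^ (p * n + 1)) (h z)) →
      (∀ z ∈ ball (0:ℂ) 1, HasSum (fun n : ℕ => b n * z ^ (p * n + 1)) (g z)) →
      (∀ z ∈ ball (0:ℂ) 1, ‖h z‖ ≤ 1) →
      (∀ z ∈ ball (0:ℂ) 1, ‖g z‖ ≤ 1) →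
      ∀ r : ℝ, 0 ≤ r → r ≤ 1 / 2 →
        ∑' n : ℕ, (‖a n‖ + ‖b n‖) * r ^ (p * n + 1) ≤ 1) ∧
    (∀ ρ : ℝ, 1 / 2 < ρ → ρ < 1 →
      ∃ (a b : ℕ → ℂ) (h g : ℂ → ℂ),
        AnalyticOn ℂ h (ball (0:ℂ) 1) ∧ AnalyticOn ℂ g (ball (0:ℂ) 1) ∧
        (∀ z ∈ ball (0:ℂ) 1, HasSum (fun n : ℕ => a n * z ^ (p * n + 1)) (h z)) ∧
        (∀ z ∈ ball (0:ℂ) 1, HasSum (fun n : ℕ => b n * z ^ (p * n + 1)) (g z)) ∧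
        (∀ z ∈ ball (0:ℂ) 1, ‖h z‖ ≤ 1) ∧
        (∀ z ∈ ball (0:ℂ) 1, ‖g z‖ ≤ 1) ∧
        1 < ∑' n : ℕ, (‖a n‖ + ‖b n‖) * ρ ^ (p * n + 1)) := by
  constructor
  · intro a b h g hh hg hsa hsb hha hgb r hr0 hr
    have hr1 : (r : ℂ) ∈ ball (0 : ℂ) 1 := by
      simpa [abs_of_nonneg hr0] using hr.trans_lt (by norm_num)
    simp_rw [add_mul]
    rw [Summable.tsum_add (summable_norm_mul_pow_of_summable_s11 hr0 (hsa _ hr1).summable)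
      (summable_norm_mul_pow_of_summable_s11 hr0 (hsb _ hr1).summable)]
    linarith [tsum_norm_mul_pow_le_half_of_norm_le_one hp hh.differentiableOn hsa hha hr0 hr,
      tsum_norm_mul_pow_le_half_of_norm_le_one hp hg.differentiableOn hsb hgb hr0 hr]
  · intro ρ hρ _
    have hs : ∀ z ∈ ball (0 : ℂ) 1,
        HasSum (fun n => (Pi.single 0 1 : ℕ → ℂ) n * z ^ (p * n + 1)) (id z) := fun z _ => by
      simpa using hasSum_single (f := fun n => (Pi.single 0 1 : ℕ → ℂ) n * z ^ (p * n + 1)) 0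
        fun n hn => by simp [hn]
    have hb : ∀ z ∈ ball (0 : ℂ) 1, ‖id z‖ ≤ 1 := fun z hz => (mem_ball_zero_iff.mp hz).le
    refine ⟨_, _, id, id, analyticOn_id, analyticOn_id, hs, hs, hb, hb, ?_⟩
    rw [tsum_eq_single 0 fun n hn => by simp [hn]]
    norm_num
    linarith
end

section
/- Let f = h + conj(g) be a locally univalent K-quasiconformal harmonic mapping of 𝔻 where h' is bounded. Then ((K+1)/(2K)) Σ_{n≥1} (|a_n| + |b_n|) n r^{n-1} ≤ ‖h'‖_∞ for all r ≤ 1/3, and the constant 1/3 is sharp. -/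
open Metric Complex

/-!
The inequality is Bohr's theorem applied to `h'` and `g'`. If `‖f‖ ≤ M` on the disc and
`f = ∑ cₙ zⁿ`, averaging `f` over the rotations by `m`-th roots of unity produces
`G(zᵐ) = ∑ c_{mk} z^{mk}`, still bounded by `M`. Schwarz's lemma for `F / (2N - F)`, where
`F = G - G 0` and `re F ≤ N = M - re c₀`, gives the Carathéodory bound `‖cₘ‖ ≤ 2 (M - re c₀)`,
i.e. `‖cₘ‖ ≤ 2 (M - ‖c₀‖)` after rotating `f` so that `c₀ ≥ 0`. Hence
`∑ ‖cₙ‖ rⁿ ≤ ‖c₀‖ + 2 (M - ‖c₀‖) r / (1 - r) ≤ M` for `r ≤ 1/3`.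
With the bounds `M` for `h'` and `k M` for `g'`, `k = (K - 1) / (K + 1)`, this gives the claim
because `(K + 1) / (2K) · (1 + k) = 1`.

For sharpness take `g = k h` with `h' = (α - z) / (1 - α z)`: then `sup ‖h'‖ = 1`, while
`∑ ‖n aₙ‖ ρⁿ⁻¹ = α + (1 - α²) ρ / (1 - α ρ)`, which exceeds `1` for `ρ > 1/3` and suitable `α < 1`.
-/

open FormalMultilinearSeries

lemma eball_zero_one : eball (0 : ℂ) 1 = ball 0 1 := by
  rw [← ENNReal.ofReal_one, eball_ofReal]

lemma IsPrimitiveRoot.sum_pow_pow_eq_ite {R : Type*} [CommRing R] [IsDomain R] {ζ : R} {m : ℕ}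
    (hζ : IsPrimitiveRoot ζ m) (i : ℕ) :
    ∑ j ∈ Finset.range m, (ζ ^ i) ^ j = if m ∣ i then (m : R) else 0 := by
  split_ifs with hmi
  · simp [(hζ.pow_eq_one_iff_dvd i).mpr hmi]
  · have hne : ζ ^ i - 1 ≠ 0 := sub_ne_zero.mpr fun h ↦ hmi ((hζ.pow_eq_one_iff_dvd i).mp h)
    refine (mul_eq_zero.mp ?_).resolve_right hne
    rw [geom_sum_mul, ← pow_mul, mul_comm, pow_mul, hζ.pow_eq_one, one_pow, sub_self]

lemma exists_pow_eq_of_mem_ball_s15 {m : ℕ} (hm : 0 < m) {w : ℂ} (hw : w ∈ ball (0 : ℂ) 1) :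
    ∃ z ∈ ball (0 : ℂ) 1, z ^ m = w := by
  obtain ⟨z, hz⟩ := IsAlgClosed.exists_pow_nat_eq w hm
  refine ⟨z, ?_, hz⟩
  rw [mem_ball_zero_iff] at hw ⊢
  rw [← hz, norm_pow] at hw
  exact (pow_lt_one_iff_of_nonneg (norm_nonneg z) hm.ne').mp hw

lemma norm_le_norm_two_mul_sub_of_re_le {z : ℂ} {N : ℝ} (hN : 0 ≤ N) (hz : z.re ≤ N) :
    ‖z‖ ≤ ‖2 * (N : ℂ) - z‖ := by
  rw [← sq_le_sq₀ (norm_nonneg _) (norm_nonneg _), Complex.sq_norm, Complex.sq_norm]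
  simp only [normSq_apply, sub_re, sub_im, mul_re, mul_im, ofReal_re, ofReal_im, re_ofNat,
    im_ofNat]
  nlinarith

lemma norm_deriv_zero_le_of_re_le_of_map_zero {F : ℂ → ℂ} {N : ℝ} (hN : 0 < N)
    (hF : DifferentiableOn ℂ F (ball 0 1)) (hre : ∀ w ∈ ball (0 : ℂ) 1, (F w).re ≤ N)
    (hF0 : F 0 = 0) : ‖deriv F 0‖ ≤ 2 * N := by
  have hden : ∀ w ∈ ball (0 : ℂ) 1, 2 * (N : ℂ) - F w ≠ 0 := fun w hw h ↦ by
    have := hre w hw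
    simp only [← sub_eq_zero.mp h, mul_re, re_ofNat, im_ofNat, ofReal_re, ofReal_im] at this
    linarith
  have hmaps : Set.MapsTo (fun w ↦ F w / (2 * N - F w)) (ball 0 1) (closedBall 0 1) :=
    fun w hw ↦ by
      simpa [norm_div] using
        div_le_one_of_le₀ (norm_le_norm_two_mul_sub_of_re_le hN.le (hre w hw)) (norm_nonneg _)
  have hdiff : DifferentiableOn ℂ (fun w ↦ F w / (2 * N - F w)) (ball 0 1) :=
    hF.div (hF.const_sub _) hden
  have hschwarz := norm_deriv_le_div_of_mapsTo_ball hdiff (by simpa [hF0] using hmaps) one_pos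
  have hF' := (hF.differentiableAt (isOpen_ball.mem_nhds (mem_ball_self one_pos))).hasDerivAt
  have hderiv : HasDerivAt (fun w ↦ F w / (2 * N - F w)) _ 0 :=
    hF'.div (hF'.const_sub _) (hden 0 (mem_ball_self one_pos))
  have hN' : (N : ℂ) ≠ 0 := ofReal_ne_zero.mpr hN.ne'
  have h2N : ‖2 * (N : ℂ)‖ = 2 * N := by simp [hN.le]
  rw [hderiv.deriv, hF0, show (deriv F 0 * (2 * N - 0) - 0 * -deriv F 0) / (2 * (N : ℂ) - 0) ^ 2
    = deriv F 0 / (2 * N) by field_simp; ring, norm_div, h2N, div_one,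
    div_le_one (by positivity)] at hschwarz
  exact hschwarz

lemma norm_deriv_zero_le_of_re_le {G : ℂ → ℂ} {M : ℝ} (hG : DifferentiableOn ℂ G (ball 0 1))
    (hre : ∀ w ∈ ball (0 : ℂ) 1, (G w).re ≤ M) : ‖deriv G 0‖ ≤ 2 * (M - (G 0).re) := by
  refine le_of_forall_pos_le_add fun ε hε ↦ ?_
  have hN : 0 < M - (G 0).re + ε / 2 := by linarith [hre 0 (mem_ball_self one_pos)]
  have h := norm_deriv_zero_le_of_re_le_of_map_zero hN (hG.sub_const (G 0))
    (fun w hw ↦ by simp only [sub_re]; linarith [hre w hw]) (sub_self _)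
  rw [deriv_sub_const] at h
  linarith

lemma summable_and_tsum_le_of_le_two_mul_sub {a : ℕ → ℝ} {M r : ℝ} (ha : ∀ n, 0 ≤ a n)
    (ha0 : a 0 ≤ M) (han : ∀ n, 0 < n → a n ≤ 2 * (M - a 0)) (hr0 : 0 ≤ r) (hr : r ≤ 1 / 3) :
    Summable (fun n ↦ a n * r ^ n) ∧ ∑' n, a n * r ^ n ≤ M := by
  have hr1 : r < 1 := by linarith
  have hgeom : HasSum (fun n ↦ 2 * (M - a 0) * r * r ^ n) (2 * (M - a 0) * r * (1 - r)⁻¹) :=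
    (hasSum_geometric_of_lt_one hr0 hr1).mul_left _
  have htail_le : ∀ n, a (n + 1) * r ^ (n + 1) ≤ 2 * (M - a 0) * r * r ^ n := fun n ↦
    calc a (n + 1) * r ^ (n + 1) ≤ 2 * (M - a 0) * r ^ (n + 1) := by
          gcongr; exact han _ n.succ_pos
      _ = 2 * (M - a 0) * r * r ^ n := by ring
  have htail : Summable (fun n ↦ a (n + 1) * r ^ (n + 1)) :=
    hgeom.summable.of_nonneg_of_le (fun n ↦ mul_nonneg (ha _) (pow_nonneg hr0 _)) htail_le
  have hsum := (summable_nat_add_iff (f := fun n ↦ a n * r ^ n) 1).mp htail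
  refine ⟨hsum, ?_⟩
  have htail_tsum := hasSum_le htail_le htail.hasSum hgeom
  have hgeom_le : 2 * (M - a 0) * r * (1 - r)⁻¹ ≤ M - a 0 := by
    rw [mul_inv_le_iff₀ (by linarith)]
    nlinarith
  rw [hsum.tsum_eq_zero_add]
  linarith [pow_zero r, mul_one (a 0)]

section PowerSeries

variable {c : ℕ → ℂ} {f : ℂ → ℂ}

lemma hasFPowerSeriesOnBall_ofScalars_of_hasSum_s15
    (hc : ∀ z ∈ ball (0 : ℂ) 1, HasSum (fun n ↦ c n * z ^ n) (f z)) :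
    HasFPowerSeriesOnBall f (ofScalars ℂ c) 0 1 where
  r_le := by
    refine ENNReal.le_of_forall_nnreal_lt fun r hr ↦ ?_
    have hr : ((r : ℝ) : ℂ) ∈ ball (0 : ℂ) 1 := by simpa using hr
    refine le_radius_of_tendsto _ (l := 0) ?_
    simpa [ofScalars_norm] using (hc _ hr).summable.tendsto_atTop_zero.norm
  r_pos := one_pos
  hasSum {z} hz := by
    simpa [ofScalars_apply_eq, mul_comm] using hc z (eball_zero_one ▸ hz)

lemma hasSum_deriv_of_hasSum
    (hc : ∀ z ∈ ball (0 : ℂ) 1, HasSum (fun n ↦ c n * z ^ n) (f z)) {z : ℂ}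
    (hz : z ∈ ball (0 : ℂ) 1) :
    HasSum (fun n : ℕ ↦ ((n : ℂ) + 1) * c (n + 1) * z ^ n) (deriv f z) := by
  have hf' := (hasFPowerSeriesOnBall_ofScalars_of_hasSum_s15 hc).fderiv.hasSum
    (eball_zero_one ▸ hz)
  rw [zero_add] at hf'
  have h1 := (ContinuousLinearMap.apply ℂ ℂ (1 : ℂ)).hasSum hf'
  simp only [ContinuousLinearMap.apply_apply, apply_eq_pow_smul_coeff, _root_.smul_apply,
    derivSeries_coeff_one, coeff_ofScalars, smul_eq_mul, nsmul_eq_mul] at h1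
  rw [← fderiv_apply_one_eq_deriv]
  exact h1.congr_fun fun n ↦ by push_cast; ring

lemma eq_coeff_zero_of_hasSum
    (hc : ∀ z ∈ ball (0 : ℂ) 1, HasSum (fun n ↦ c n * z ^ n) (f z)) : f 0 = c 0 := by
  simpa using ((hasFPowerSeriesOnBall_ofScalars_of_hasSum_s15 hc).coeff_zero (fun _ ↦ 0)).symm

lemma deriv_zero_eq_of_hasSum
    (hc : ∀ z ∈ ball (0 : ℂ) 1, HasSum (fun n ↦ c n * z ^ n) (f z)) : deriv f 0 = c 1 := by
  simpa using (hasFPowerSeriesOnBall_ofScalars_of_hasSum_s15 hc).hasFPowerSeriesAt.deriv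

lemma hasSum_coeff_mul_pow_of_hasSum
    (hc : ∀ z ∈ ball (0 : ℂ) 1, HasSum (fun n ↦ c n * z ^ n) (f z))
    {m : ℕ} (hm : 0 < m) {ζ : ℂ} (hζ : IsPrimitiveRoot ζ m) {z : ℂ} (hz : z ∈ ball (0 : ℂ) 1) :
    HasSum (fun k ↦ c (m * k) * (z ^ m) ^ k)
      ((m : ℂ)⁻¹ * ∑ j ∈ Finset.range m, f (ζ ^ j * z)) := by
  have hrot : ∀ j ∈ Finset.range m,
      HasSum (fun n ↦ c n * (ζ ^ j * z) ^ n) (f (ζ ^ j * z)) := fun j _ ↦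
    hc _ (by simpa [hζ.norm'_eq_one hm.ne'] using hz)
  have hsum := hasSum_sum hrot
  have hterm : ∀ n, ∑ j ∈ Finset.range m, c n * (ζ ^ j * z) ^ n
      = if m ∣ n then (m : ℂ) * (c n * z ^ n) else 0 := fun n ↦ by
    simp_rw [mul_pow, ← pow_mul, mul_comm _ n, pow_mul, mul_left_comm (c n), ← mul_assoc,
      ← Finset.sum_mul, hζ.sum_pow_pow_eq_ite, ite_mul, zero_mul]
  simp_rw [hterm] at hsum
  rw [← (mul_right_injective₀ hm.ne').hasSum_iff] at hsum
  · refine (hsum.mul_left (m : ℂ)⁻¹).congr_fun fun k ↦ ?_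
    simp [pow_mul, hm.ne']
  · rintro n hn
    rw [if_neg fun ⟨k, hk⟩ ↦ hn ⟨k, hk.symm⟩]

lemma exists_hasSum_coeff_mul_re_le
    (hc : ∀ z ∈ ball (0 : ℂ) 1, HasSum (fun n ↦ c n * z ^ n) (f z)) {M : ℝ}
    (hre : ∀ z ∈ ball (0 : ℂ) 1, (f z).re ≤ M) {m : ℕ} (hm : 0 < m) :
    ∃ G : ℂ → ℂ, (∀ w ∈ ball (0 : ℂ) 1, HasSum (fun k ↦ c (m * k) * w ^ k) (G w)) ∧
      ∀ w ∈ ball (0 : ℂ) 1, (G w).re ≤ M := by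
  have hζ := Complex.isPrimitiveRoot_exp m hm.ne'
  refine ⟨fun w ↦ ∑' k, c (m * k) * w ^ k, fun w hw ↦ ?_, fun w hw ↦ ?_⟩
  all_goals
    obtain ⟨z, hz, rfl⟩ := exists_pow_eq_of_mem_ball_s15 hm hw
    have hG := hasSum_coeff_mul_pow_of_hasSum hc hm hζ hz
    dsimp only
  · exact hG.summable.hasSum
  · rw [hG.tsum_eq, ← ofReal_natCast, ← ofReal_inv, re_ofReal_mul, re_sum,
      inv_mul_le_iff₀ (by positivity)]
    calc ∑ j ∈ Finset.range m, (f _).re ≤ ∑ _j ∈ Finset.range m, M :=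
          Finset.sum_le_sum fun j _ ↦ hre _ (by simpa [hζ.norm'_eq_one hm.ne'] using hz)
      _ = m * M := by simp

lemma norm_coeff_le_of_re_le
    (hc : ∀ z ∈ ball (0 : ℂ) 1, HasSum (fun n ↦ c n * z ^ n) (f z)) {M : ℝ}
    (hre : ∀ z ∈ ball (0 : ℂ) 1, (f z).re ≤ M) {n : ℕ} (hn : 0 < n) :
    ‖c n‖ ≤ 2 * (M - (c 0).re) := by
  obtain ⟨G, hGc, hGre⟩ := exists_hasSum_coeff_mul_re_le hc hre hn
  have hG := hasFPowerSeriesOnBall_ofScalars_of_hasSum_s15 hGc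
  simpa [eq_coeff_zero_of_hasSum hGc, deriv_zero_eq_of_hasSum hGc] using
    norm_deriv_zero_le_of_re_le (eball_zero_one ▸ hG.differentiableOn) hGre

lemma norm_coeff_le_of_norm_le
    (hc : ∀ z ∈ ball (0 : ℂ) 1, HasSum (fun n ↦ c n * z ^ n) (f z)) {M : ℝ}
    (hM : ∀ z ∈ ball (0 : ℂ) 1, ‖f z‖ ≤ M) {n : ℕ} (hn : 0 < n) :
    ‖c n‖ ≤ 2 * (M - ‖c 0‖) := by
  set u := exp (-(arg (c 0)) * I)
  have hu : ‖u‖ = 1 := by simpa [u] using norm_exp_ofReal_mul_I (-arg (c 0))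
  have huc : u * c 0 = ‖c 0‖ := by
    conv_lhs => rw [← norm_mul_exp_arg_mul_I (c 0)]
    rw [mul_left_comm, ← exp_add]
    simp
  have h := norm_coeff_le_of_re_le (c := fun n ↦ u * c n) (f := fun z ↦ u * f z)
    (fun z hz ↦ by simpa only [mul_assoc] using (hc z hz).mul_left u)
    (fun z hz ↦ (re_le_norm _).trans (by simpa [hu] using hM z hz)) hn
  simpa [hu, huc] using h

lemma bohr_inequality
    (hc : ∀ z ∈ ball (0 : ℂ) 1, HasSum (fun n ↦ c n * z ^ n) (f z)) {M : ℝ}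
    (hM : ∀ z ∈ ball (0 : ℂ) 1, ‖f z‖ ≤ M) {r : ℝ} (hr0 : 0 ≤ r) (hr : r ≤ 1 / 3) :
    Summable (fun n ↦ ‖c n‖ * r ^ n) ∧ ∑' n, ‖c n‖ * r ^ n ≤ M :=
  summable_and_tsum_le_of_le_two_mul_sub (fun _ ↦ norm_nonneg _)
    (eq_coeff_zero_of_hasSum hc ▸ hM 0 (mem_ball_self one_pos))
    (fun _ ↦ norm_coeff_le_of_norm_le hc hM) hr0 hr

end PowerSeries

lemma bohr_harmonic_le {K : ℝ} (hK : 1 ≤ K) {a b : ℕ → ℂ} {h g : ℂ → ℂ} {M : ℝ}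
    (ha : ∀ z ∈ ball (0 : ℂ) 1, HasSum (fun n ↦ a n * z ^ n) (h z))
    (hb : ∀ z ∈ ball (0 : ℂ) 1, HasSum (fun n ↦ b n * z ^ n) (g z))
    (hM : ∀ z ∈ ball (0 : ℂ) 1, ‖deriv h z‖ ≤ M)
    (hqc : ∀ z ∈ ball (0 : ℂ) 1, ‖deriv g z‖ ≤ ((K - 1) / (K + 1)) * ‖deriv h z‖)
    {r : ℝ} (hr0 : 0 ≤ r) (hr : r ≤ 1 / 3) :
    ((K + 1) / (2 * K)) * ∑' n : ℕ, (‖a (n + 1)‖ + ‖b (n + 1)‖) * (n + 1) * r ^ n ≤ M := by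
  have hk : 0 ≤ (K - 1) / (K + 1) := div_nonneg (by linarith) (by linarith)
  have hnorm : ∀ (c : ℕ → ℂ) (n : ℕ), ‖((n : ℂ) + 1) * c (n + 1)‖ = (n + 1) * ‖c (n + 1)‖ :=
    fun c n ↦ by rw [norm_mul]; norm_cast
  obtain ⟨ha_sum, ha_le⟩ := bohr_inequality
    (fun z hz ↦ hasSum_deriv_of_hasSum ha hz) hM hr0 hr
  obtain ⟨hb_sum, hb_le⟩ := bohr_inequality
    (fun z hz ↦ hasSum_deriv_of_hasSum hb hz)
    (fun z hz ↦ (hqc z hz).trans (mul_le_mul_of_nonneg_left (hM z hz) hk)) hr0 hr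
  simp only [hnorm] at ha_sum ha_le hb_sum hb_le
  have hsplit : ∑' n : ℕ, (‖a (n + 1)‖ + ‖b (n + 1)‖) * (n + 1) * r ^ n
      = ∑' n : ℕ, (n + 1) * ‖a (n + 1)‖ * r ^ n + ∑' n : ℕ, (n + 1) * ‖b (n + 1)‖ * r ^ n := by
    rw [← ha_sum.tsum_add hb_sum]
    congr 1 with n
    ring
  calc ((K + 1) / (2 * K)) * ∑' n : ℕ, (‖a (n + 1)‖ + ‖b (n + 1)‖) * (n + 1) * r ^ n
      ≤ ((K + 1) / (2 * K)) * (M + (K - 1) / (K + 1) * M) := by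
        rw [hsplit]; gcongr
    _ = M := by field_simp; ring

/-- Taylor coefficients of `z / α + (1 - α²) / α² * log (1 - α z)`, whose derivative is the disc
automorphism `(α - z) / (1 - α z)`. -/
noncomputable def bohrExtremalCoeff (α : ℝ) : ℕ → ℂ
  | 0 => 0
  | 1 => α
  | n + 2 => ((-(1 - α ^ 2) * α ^ n / (n + 2) : ℝ) : ℂ)

noncomputable def bohrExtremal (α : ℝ) (z : ℂ) : ℂ := ∑' n, bohrExtremalCoeff α n * z ^ n

section Extremal

variable {α : ℝ}

lemma norm_bohrExtremalCoeff_le_one (hα0 : 0 ≤ α) (hα1 : α ≤ 1) (n : ℕ) :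
    ‖bohrExtremalCoeff α n‖ ≤ 1 := by
  match n with
  | 0 => simp [bohrExtremalCoeff]
  | 1 => simpa [bohrExtremalCoeff, abs_of_nonneg hα0] using hα1
  | n + 2 =>
    have h1 : 0 ≤ 1 - α ^ 2 := by nlinarith
    have h2 : (1 - α ^ 2) * α ^ n ≤ 1 := by
      nlinarith [pow_le_one₀ hα0 hα1 (n := n), pow_nonneg hα0 n, sq_nonneg α]
    rw [bohrExtremalCoeff, norm_real, Real.norm_eq_abs, neg_mul, abs_div, abs_neg,
      abs_of_nonneg (mul_nonneg h1 (pow_nonneg hα0 n)), abs_of_pos (by positivity),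
      div_le_one (by positivity)]
    linarith

lemma hasSum_bohrExtremal (hα0 : 0 ≤ α) (hα1 : α ≤ 1) {z : ℂ} (hz : z ∈ ball (0 : ℂ) 1) :
    HasSum (fun n ↦ bohrExtremalCoeff α n * z ^ n) (bohrExtremal α z) := by
  rw [mem_ball_zero_iff] at hz
  refine (Summable.of_norm_bounded (summable_geometric_of_lt_one (norm_nonneg z) hz)
    fun n ↦ ?_).hasSum
  rw [norm_mul, norm_pow]
  exact mul_le_of_le_one_left (by positivity) (norm_bohrExtremalCoeff_le_one hα0 hα1 n)

lemma hasSum_deriv_bohrExtremal (hα0 : 0 ≤ α) (hα1 : α ≤ 1) {z : ℂ} (hz : z ∈ ball (0 : ℂ) 1) :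
    HasSum (fun n : ℕ ↦ ((n : ℂ) + 1) * bohrExtremalCoeff α (n + 1) * z ^ n)
      ((α - z) / (1 - α * z)) := by
  rw [mem_ball_zero_iff] at hz
  have hαz : ‖(α : ℂ) * z‖ < 1 := by
    rw [norm_mul, norm_real, Real.norm_eq_abs, abs_of_nonneg hα0]
    nlinarith [norm_nonneg z]
  have hden : 1 - (α : ℂ) * z ≠ 0 := sub_ne_zero.mpr fun h ↦ by simp [← h] at hαz
  rw [← hasSum_nat_add_iff' 1]
  have hval : (α - z) / (1 - α * z) - ∑ i ∈ Finset.range 1, ((i : ℂ) + 1) *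
      bohrExtremalCoeff α (i + 1) * z ^ i = -(1 - (α : ℂ) ^ 2) * z * (1 - α * z)⁻¹ := by
    rw [Finset.sum_range_one]
    simp only [bohrExtremalCoeff]
    push_cast
    field_simp
    ring
  rw [hval]
  refine ((hasSum_geometric_of_norm_lt_one hαz).mul_left _).congr_fun fun n ↦ ?_
  have hn : (n : ℂ) + 2 ≠ 0 := by norm_cast
  simp only [bohrExtremalCoeff]
  push_cast
  field_simp
  ring

lemma deriv_bohrExtremal (hα0 : 0 ≤ α) (hα1 : α ≤ 1) {z : ℂ} (hz : z ∈ ball (0 : ℂ) 1) :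
    deriv (bohrExtremal α) z = (α - z) / (1 - α * z) :=
  (hasSum_deriv_of_hasSum (fun _ ↦ hasSum_bohrExtremal hα0 hα1) hz).unique
    (hasSum_deriv_bohrExtremal hα0 hα1 hz)

lemma norm_sub_le_norm_one_sub_mul (hα : |α| ≤ 1) {z : ℂ} (hz : ‖z‖ ≤ 1) :
    ‖(α : ℂ) - z‖ ≤ ‖1 - α * z‖ := by
  rw [← sq_le_sq₀ (norm_nonneg _) (norm_nonneg _), Complex.sq_norm, Complex.sq_norm]
  have hz' : normSq z ≤ 1 := by rw [← Complex.sq_norm]; nlinarith [norm_nonneg z]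
  have hα' : α ^ 2 ≤ 1 := by nlinarith [sq_abs α, abs_nonneg α]
  have key : normSq (1 - α * z) - normSq (α - z) = (1 - α ^ 2) * (1 - normSq z) := by
    simp only [normSq_apply, sub_re, sub_im, mul_re, mul_im, one_re, one_im, ofReal_re,
      ofReal_im]
    ring
  nlinarith [mul_nonneg (sub_nonneg.mpr hα') (sub_nonneg.mpr hz')]

lemma norm_deriv_bohrExtremal_le_one (hα0 : 0 ≤ α) (hα1 : α ≤ 1) {z : ℂ}
    (hz : z ∈ ball (0 : ℂ) 1) : ‖deriv (bohrExtremal α) z‖ ≤ 1 := by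
  rw [deriv_bohrExtremal hα0 hα1 hz, norm_div]
  exact div_le_one_of_le₀ (norm_sub_le_norm_one_sub_mul (abs_le.mpr ⟨by linarith, hα1⟩)
    (mem_ball_zero_iff.mp hz).le) (norm_nonneg _)

lemma hasSum_norm_bohrExtremalCoeff (hα0 : 0 ≤ α) (hα1 : α ≤ 1) {ρ : ℝ} (hρ0 : 0 ≤ ρ)
    (hαρ : α * ρ < 1) :
    HasSum (fun n : ℕ ↦ ‖bohrExtremalCoeff α (n + 1)‖ * (n + 1) * ρ ^ n)
      (α + (1 - α ^ 2) * ρ * (1 - α * ρ)⁻¹) := by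
  have h1 : 0 ≤ 1 - α ^ 2 := by nlinarith
  rw [← hasSum_nat_add_iff' 1]
  have hval : α + (1 - α ^ 2) * ρ * (1 - α * ρ)⁻¹ - ∑ i ∈ Finset.range 1,
      ‖bohrExtremalCoeff α (i + 1)‖ * (i + 1) * ρ ^ i = (1 - α ^ 2) * ρ * (1 - α * ρ)⁻¹ := by
    simp [bohrExtremalCoeff, abs_of_nonneg hα0]
  rw [hval]
  refine ((hasSum_geometric_of_lt_one (by positivity) hαρ).mul_left _).congr_fun fun n ↦ ?_
  have hn : (n : ℝ) + 2 ≠ 0 := by positivity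
  rw [bohrExtremalCoeff, norm_real, Real.norm_eq_abs, neg_mul, neg_div, abs_neg,
    abs_of_nonneg (by positivity)]
  push_cast
  field_simp
  ring

lemma exists_one_lt_bohrExtremal_sum {ρ : ℝ} (hρ : 1 / 3 < ρ) (hρ1 : ρ < 1) :
    ∃ α : ℝ, 0 ≤ α ∧ α ≤ 1 ∧ α * ρ < 1 ∧ 1 < α + (1 - α ^ 2) * ρ * (1 - α * ρ)⁻¹ := by
  have hρ0 : 0 < ρ := by linarith
  have hα1 : (1 + ρ) / (4 * ρ) < 1 := by rw [div_lt_one (by positivity)]; linarith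
  have hαρ : (1 + ρ) / (4 * ρ) * ρ = (1 + ρ) / 4 := by field_simp
  -- the sum minus `1` is `(1 - α) (ρ (1 + 2α) - 1) / (1 - αρ)`, and `ρ (1 + 2α) - 1 = (3ρ - 1) / 2`
  have key : (1 + ρ) / (4 * ρ) + (1 - ((1 + ρ) / (4 * ρ)) ^ 2) * ρ * (1 - (1 + ρ) / (4 * ρ) * ρ)⁻¹
      - 1 = 2 * (1 - (1 + ρ) / (4 * ρ)) * (3 * ρ - 1) / (3 - ρ) := by
    have : 3 - ρ ≠ 0 := by linarith
    rw [hαρ, show 1 - (1 + ρ) / 4 = (3 - ρ) / 4 by ring]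
    field_simp
    ring
  refine ⟨(1 + ρ) / (4 * ρ), by positivity, hα1.le, by rw [hαρ]; linarith, ?_⟩
  rw [← sub_pos, key]
  exact div_pos (mul_pos (mul_pos two_pos (by linarith)) (by linarith)) (by linarith)

end Extremal

lemma exists_bohr_harmonic_gt {K : ℝ} (hK : 1 ≤ K) {ρ : ℝ} (hρ : 1 / 3 < ρ) (hρ1 : ρ < 1) :
    ∃ (a b : ℕ → ℂ) (h g : ℂ → ℂ) (M : ℝ),
      AnalyticOn ℂ h (ball (0:ℂ) 1) ∧ AnalyticOn ℂ g (ball (0:ℂ) 1) ∧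
      (∀ z ∈ ball (0:ℂ) 1, HasSum (fun n : ℕ => a n * z ^ n) (h z)) ∧
      (∀ z ∈ ball (0:ℂ) 1, HasSum (fun n : ℕ => b n * z ^ n) (g z)) ∧
      (∀ z ∈ ball (0:ℂ) 1, ‖deriv h z‖ ≤ M) ∧
      (∀ z ∈ ball (0:ℂ) 1, ‖deriv g z‖ ≤ ((K - 1) / (K + 1)) * ‖deriv h z‖) ∧
      M < ((K + 1) / (2 * K)) *
        ∑' n : ℕ, (‖a (n + 1)‖ + ‖b (n + 1)‖) * (n + 1) * ρ ^ n := by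
  obtain ⟨α, hα0, hα1, hαρ, hgt⟩ := exists_one_lt_bohrExtremal_sum hρ hρ1
  set k := (K - 1) / (K + 1)
  have hk : 0 ≤ k := div_nonneg (by linarith) (by linarith)
  have hh : AnalyticOn ℂ (bohrExtremal α) (ball 0 1) := eball_zero_one ▸
    (hasFPowerSeriesOnBall_ofScalars_of_hasSum_s15 fun _ ↦
      hasSum_bohrExtremal hα0 hα1).analyticOnNhd.analyticOn
  refine ⟨bohrExtremalCoeff α, fun n ↦ k * bohrExtremalCoeff α n, bohrExtremal α,
    fun z ↦ k * bohrExtremal α z, 1, hh, analyticOn_const.mul hh,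
    fun z hz ↦ hasSum_bohrExtremal hα0 hα1 hz,
    fun z hz ↦ by simpa only [mul_assoc] using (hasSum_bohrExtremal hα0 hα1 hz).mul_left _,
    fun z hz ↦ norm_deriv_bohrExtremal_le_one hα0 hα1 hz, fun z hz ↦ ?_, ?_⟩
  · rw [deriv_const_mul _ (hh.differentiableOn.differentiableAt (isOpen_ball.mem_nhds hz)),
      norm_mul, norm_real, Real.norm_of_nonneg hk]
  · have hsummand : ∀ n : ℕ,
        (‖bohrExtremalCoeff α (n + 1)‖ + ‖k * bohrExtremalCoeff α (n + 1)‖) * (n + 1) * ρ ^ n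
          = (1 + k) * (‖bohrExtremalCoeff α (n + 1)‖ * (n + 1) * ρ ^ n) :=
      fun n ↦ by rw [norm_mul, norm_real, Real.norm_of_nonneg hk]; ring
    have hK0 : K ≠ 0 := by linarith
    have hK1 : K + 1 ≠ 0 := by linarith
    simp_rw [hsummand, tsum_mul_left,
      (hasSum_norm_bohrExtremalCoeff hα0 hα1 (by linarith) hαρ).tsum_eq, ← mul_assoc,
      show (K + 1) / (2 * K) * (1 + k) = 1 by simp only [k]; field_simp; ring, one_mul]
    exact hgt

theorem bohr_stmt_15 (K : ℝ) (hK : 1 ≤ K) :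
    (∀ (a b : ℕ → ℂ) (h g : ℂ → ℂ) (M : ℝ),
      AnalyticOn ℂ h (ball (0:ℂ) 1) → AnalyticOn ℂ g (ball (0:ℂ) 1) →
      (∀ z ∈ ball (0:ℂ) 1, HasSum (fun n : ℕ => a n * z ^ n) (h z)) →
      (∀ z ∈ ball (0:ℂ) 1, HasSum (fun n : ℕ => b n * z ^ n) (g z)) →
      (∀ z ∈ ball (0:ℂ) 1, ‖deriv h z‖ ≤ M) →
      (∀ z ∈ ball (0:ℂ) 1,
        ‖deriv g z‖ ≤ ((K - 1) / (K + 1)) * ‖deriv h z‖) →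
      ∀ r : ℝ, 0 ≤ r → r ≤ 1 / 3 →
        ((K + 1) / (2 * K)) *
          ∑' n : ℕ, (‖a (n + 1)‖ + ‖b (n + 1)‖) * (n + 1) * r ^ n
        ≤ M) ∧
    (∀ ρ : ℝ, 1 / 3 < ρ → ρ < 1 →
      ∃ (a b : ℕ → ℂ) (h g : ℂ → ℂ) (M : ℝ),
        AnalyticOn ℂ h (ball (0:ℂ) 1) ∧ AnalyticOn ℂ g (ball (0:ℂ) 1) ∧
        (∀ z ∈ ball (0:ℂ) 1, HasSum (fun n : ℕ => a n * z ^ n) (h z)) ∧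
        (∀ z ∈ ball (0:ℂ) 1, HasSum (fun n : ℕ => b n * z ^ n) (g z)) ∧
        (∀ z ∈ ball (0:ℂ) 1, ‖deriv h z‖ ≤ M) ∧
        (∀ z ∈ ball (0:ℂ) 1,
          ‖deriv g z‖ ≤ ((K - 1) / (K + 1)) * ‖deriv h z‖) ∧
        M < ((K + 1) / (2 * K)) *
          ∑' n : ℕ, (‖a (n + 1)‖ + ‖b (n + 1)‖) * (n + 1) * ρ ^ n) :=
  ⟨fun _ _ _ _ _ _ _ ha hb hM hqc _ hr0 hr ↦ bohr_harmonic_le hK ha hb hM hqc hr0 hr,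
    fun _ hρ hρ1 ↦ exists_bohr_harmonic_gt hK hρ hρ1⟩
end

section
/- If f(z) = Σ a_n zⁿ is analytic on the unit disk with |f(0)| + sup_{z∈𝔻}(1-|z|²)|f'(z)| ≤ 1, then Σ_{n≥0} |a_n| rⁿ ≤ 1 for all r ≤ R, where R ≈ 0.55356 is the positive root of 1 - R + R log(1-R) = 0. -/
open Metric Complex Finset Filter Set

/-!
Write `M = 1 - |a₀|`. The Bloch condition says `|f'| ≤ M / (1 - ρ²)` on the circle `|z| = ρ`, and
`f' = ∑ (n+1) a_{n+1} zⁿ`, so Bessel's inequality on that circle gives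
`∑ (n+1)² |a_{n+1}|² xⁿ ≤ M² / (1 - x)²` with `x = ρ²`. Integrating in `x` from `0` to `r` yields
`∑ (n+1) |a_{n+1}|² r^{n+1} ≤ M² r / (1 - r)`, and Cauchy–Schwarz against
`∑ r^{n+1} / (n+1) = log (1 / (1 - r))` bounds `∑_{n ≥ 1} |aₙ| rⁿ` by
`M √(r log (1 / (1 - r)) / (1 - r))`. This is at most `M` as long as `1 - r + r log (1 - r) ≥ 0`,
which holds for `r ≤ R` because that function decreases on `[0, 1)`.
-/

theorem summable_norm_mul_pow_of_summable_mul_pow {𝕜 : Type*} [NormedDivisionRing 𝕜]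
    {b : ℕ → 𝕜} {w : 𝕜} (hb : Summable fun n => b n * w ^ n) {t : ℝ} (ht0 : 0 ≤ t)
    (ht : t < ‖w‖) : Summable fun n => ‖b n‖ * t ^ n := by
  obtain ⟨C, hC⟩ := hb.tendsto_atTop_zero.norm.bddAbove_range
  have hw : 0 < ‖w‖ := ht0.trans_lt ht
  refine Summable.of_nonneg_of_le (fun n => by positivity) (fun n => ?_)
    ((summable_geometric_of_lt_one (by positivity) ((div_lt_one hw).2 ht)).mul_left C)
  have hn : ‖b n‖ * ‖w‖ ^ n ≤ C := by simpa [norm_mul, norm_pow] using hC ⟨n, rfl⟩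
  calc ‖b n‖ * t ^ n = ‖b n‖ * ‖w‖ ^ n * (t / ‖w‖) ^ n := by
        rw [div_pow, mul_assoc, mul_div_cancel₀ _ (by positivity)]
    _ ≤ C * (t / ‖w‖) ^ n := by gcongr

theorem hasSum_deriv_of_hasSum_mul_pow {a : ℕ → ℂ} {f : ℂ → ℂ} {s : ℝ}
    (ha : ∀ z ∈ ball (0 : ℂ) s, HasSum (fun n => a n * z ^ n) (f z)) {z : ℂ}
    (hz : z ∈ ball (0 : ℂ) s) :
    HasSum (fun n => (n + 1) * a (n + 1) * z ^ n) (deriv f z) := by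
  rw [mem_ball_zero_iff] at hz
  obtain ⟨t, hzt, hts⟩ := exists_between hz
  obtain ⟨t', htt', hts'⟩ := exists_between hts
  have ht' : (t' : ℂ) ∈ ball (0 : ℂ) s := by
    rwa [mem_ball_zero_iff, norm_real, Real.norm_of_nonneg (by linarith [norm_nonneg z])]
  have hu := summable_norm_mul_pow_of_summable_mul_pow (ha _ ht').summable
    ((norm_nonneg z).trans hzt.le)
    (by rwa [norm_real, Real.norm_of_nonneg (by linarith [norm_nonneg z])])
  have hfeq : (fun w => ∑' n, a n * w ^ n) =ᶠ[nhds z] f := by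
    filter_upwards [isOpen_ball.mem_nhds (mem_ball_zero_iff.2 hz)] with w hw
    exact (ha w hw).tsum_eq
  have hderiv := hasSum_deriv_of_summable_norm hu
    (F := fun n w => a n * w ^ n) (U := ball 0 t)
    (fun n => (differentiable_id.pow n).const_mul (a n) |>.differentiableOn) isOpen_ball
    (fun n w hw => by
      rw [mem_ball_zero_iff] at hw
      rw [norm_mul, norm_pow]; gcongr)
    (mem_ball_zero_iff.2 hzt)
  rw [hfeq.deriv_eq, ← hasSum_nat_add_iff' 1] at hderiv
  have hterm : ∀ n : ℕ,
      deriv (fun w => a (n + 1) * w ^ (n + 1)) z = (n + 1) * a (n + 1) * z ^ n := fun n => by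
    rw [deriv_const_mul_field, deriv_pow_field, Nat.add_sub_cancel]; push_cast; ring
  simpa [hterm] using hderiv

theorem sum_range_norm_sq_eq_circleAverage (c : ℕ → ℂ) (K : ℕ) :
    ∑ n ∈ range K, ‖c n‖ ^ 2 =
      Real.circleAverage (fun w => ‖∑ n ∈ range K, c n * w ^ n‖ ^ 2) 0 1 := by
  set p : Polynomial ℂ := ∑ n ∈ range K, Polynomial.monomial n (c n)
  have hcoeff : ∀ n, p.coeff n = if n ∈ range K then c n else 0 := by
    intro n
    simp [p, Polynomial.coeff_monomial]
  have hsupp : p.support ⊆ range K := fun n hn => by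
    by_contra h
    exact Polynomial.mem_support_iff.1 hn (by simp [hcoeff, h])
  convert p.sum_sq_norm_coeff_eq_circleAverage using 1
  · rw [Finset.sum_subset hsupp]
    · exact Finset.sum_congr rfl fun n hn => by simp [hcoeff, hn]
    · intro n _ hn
      simp [Polynomial.notMem_support_iff.1 hn]
  · simp [p, Polynomial.eval_finsetSum]

theorem norm_sum_range_mul_pow_le {c : ℕ → ℂ} (hc : Summable fun n => ‖c n‖) {w : ℂ}
    (hw : ‖w‖ = 1) (K : ℕ) :
    ‖∑ n ∈ range K, c n * w ^ n‖ ≤ ‖∑' n, c n * w ^ n‖ + ∑' n, ‖c (n + K)‖ := by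
  have hnorm : ∀ n, ‖c n * w ^ n‖ = ‖c n‖ := fun n => by simp [hw]
  have hcw : Summable fun n => c n * w ^ n := .of_norm (by simpa only [hnorm] using hc)
  rw [← hcw.sum_add_tsum_nat_add K]
  calc ‖∑ n ∈ range K, c n * w ^ n‖
      ≤ ‖∑ n ∈ range K, c n * w ^ n + ∑' n, c (n + K) * w ^ (n + K)‖
        + ‖∑' n, c (n + K) * w ^ (n + K)‖ := norm_le_add_norm_add _ _
    _ ≤ _ := by
      gcongr
      refine (norm_tsum_le_tsum_norm ?_).trans_eq ?_
      · simpa only [hnorm] using (summable_nat_add_iff K).2 hc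
      · simp only [hnorm]

theorem sum_range_norm_sq_le_of_norm_tsum_le {c : ℕ → ℂ} (hc : Summable fun n => ‖c n‖)
    {B : ℝ} (hB : ∀ w : ℂ, ‖w‖ = 1 → ‖∑' n, c n * w ^ n‖ ≤ B) (N : ℕ) :
    ∑ n ∈ range N, ‖c n‖ ^ 2 ≤ B ^ 2 := by
  have hB0 : 0 ≤ B := (norm_nonneg _).trans (hB 1 norm_one)
  have htail : Tendsto (fun K => (B + ∑' n, ‖c (n + K)‖) ^ 2) atTop (nhds (B ^ 2)) := by
    simpa using ((tendsto_sum_nat_add fun n => ‖c n‖).const_add B).pow 2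
  -- Parseval for the partial sums, which exceed `B` on the circle by at most the tail of `∑ ‖c n‖`.
  refine ge_of_tendsto htail (eventually_atTop.2 ⟨N, fun K hNK => ?_⟩)
  have hK : ∑ n ∈ range K, ‖c n‖ ^ 2 ≤ (B + ∑' n, ‖c (n + K)‖) ^ 2 := by
    rw [sum_range_norm_sq_eq_circleAverage]
    refine Real.circleAverage_mono_on_of_le_circle
      ((by fun_prop : Continuous _).continuousOn.circleIntegrable zero_le_one) fun w hw => ?_
    rw [abs_one, mem_sphere_zero_iff_norm] at hw
    gcongr
    exact (norm_sum_range_mul_pow_le hc hw K).trans (by gcongr; exact hB w hw)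
  exact (sum_le_sum_of_subset_of_nonneg (range_subset_range.2 hNK)
    fun _ _ _ => by positivity).trans hK

theorem one_sub_ne_zero_of_mem_uIcc {r x : ℝ} (hr : r < 1) (hx : x ∈ uIcc 0 r) : 1 - x ≠ 0 :=
  (sub_pos.2 (hx.2.trans_lt (sup_lt_iff.2 ⟨zero_lt_one, hr⟩))).ne'

theorem intervalIntegrable_div_one_sub_sq {r : ℝ} (hr : r < 1) (C : ℝ) :
    IntervalIntegrable (fun x => C / (1 - x) ^ 2) MeasureTheory.volume 0 r :=
  ContinuousOn.intervalIntegrable (continuousOn_const.div (by fun_prop)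
    fun _ hx => pow_ne_zero 2 (one_sub_ne_zero_of_mem_uIcc hr hx))

theorem integral_div_one_sub_sq {r : ℝ} (hr : r < 1) (C : ℝ) :
    ∫ x in (0 : ℝ)..r, C / (1 - x) ^ 2 = C * r / (1 - r) := by
  have hderiv : ∀ x ∈ uIcc 0 r, HasDerivAt (fun x => C / (1 - x)) (C / (1 - x) ^ 2) x :=
    fun x hx => by
      simpa [div_eq_mul_inv] using
        ((hasDerivAt_id x).const_sub 1).fun_inv (one_sub_ne_zero_of_mem_uIcc hr hx) |>.const_mul C
  rw [intervalIntegral.integral_eq_sub_of_hasDerivAt hderiv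
    (intervalIntegrable_div_one_sub_sq hr C)]
  field_simp [one_sub_ne_zero_of_mem_uIcc hr right_mem_uIcc]
  ring

theorem sum_range_mul_pow_succ_div_le {d : ℕ → ℝ} {C r : ℝ} (hr0 : 0 ≤ r) (hr1 : r < 1)
    {N : ℕ} (h : ∀ x ∈ Icc 0 r, ∑ n ∈ range N, d n * x ^ n ≤ C / (1 - x) ^ 2) :
    ∑ n ∈ range N, d n * (r ^ (n + 1) / (n + 1)) ≤ C * r / (1 - r) := by
  calc ∑ n ∈ range N, d n * (r ^ (n + 1) / (n + 1))
      = ∫ x in (0 : ℝ)..r, ∑ n ∈ range N, d n * x ^ n := by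
        rw [intervalIntegral.integral_finsetSum fun n _ =>
          (by fun_prop : Continuous _).intervalIntegrable _ _]
        simp [integral_pow]
    _ ≤ ∫ x in (0 : ℝ)..r, C / (1 - x) ^ 2 :=
        intervalIntegral.integral_mono_on hr0
          ((by fun_prop : Continuous _).intervalIntegrable _ _)
          (intervalIntegrable_div_one_sub_sq hr1 C) h
    _ = C * r / (1 - r) := integral_div_one_sub_sq hr1 C

section BlochBound

variable {a : ℕ → ℂ} {f : ℂ → ℂ} {M : ℝ}

theorem sum_range_sq_mul_norm_sq_mul_pow_le
    (ha : ∀ z ∈ ball (0 : ℂ) 1, HasSum (fun n => a n * z ^ n) (f z))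
    (hM : ∀ z ∈ ball (0 : ℂ) 1, (1 - ‖z‖ ^ 2) * ‖deriv f z‖ ≤ M)
    {x : ℝ} (hx0 : 0 ≤ x) (hx1 : x < 1) (N : ℕ) :
    ∑ n ∈ range N, ((n + 1) ^ 2 * ‖a (n + 1)‖ ^ 2) * x ^ n ≤ M ^ 2 / (1 - x) ^ 2 := by
  set ρ := √x
  have hρ0 : 0 ≤ ρ := Real.sqrt_nonneg x
  have hρx : ρ ^ 2 = x := Real.sq_sqrt hx0
  have hρ1 : ρ < 1 := by nlinarith
  have hb := fun z (hz : z ∈ ball (0 : ℂ) 1) => hasSum_deriv_of_hasSum_mul_pow ha hz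
  set c : ℕ → ℂ := fun n => (n + 1) * a (n + 1) * ρ ^ n
  have hcoef : ∀ n : ℕ, ‖((n : ℂ) + 1) * a (n + 1)‖ = (n + 1) * ‖a (n + 1)‖ := fun n => by
    rw [norm_mul]; norm_cast
  have hnorm : ∀ n, ‖c n‖ = (n + 1) * ‖a (n + 1)‖ * ρ ^ n := fun n => by
    rw [norm_mul, hcoef, norm_pow, norm_real, Real.norm_of_nonneg hρ0]
  have hc : Summable fun n => ‖c n‖ := by
    have hw : (((1 + ρ) / 2 : ℝ) : ℂ) ∈ ball (0 : ℂ) 1 := by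
      rw [mem_ball_zero_iff, norm_real, Real.norm_of_nonneg (by positivity)]; linarith
    simpa only [hnorm, hcoef] using
      summable_norm_mul_pow_of_summable_mul_pow (hb _ hw).summable hρ0
        (by rw [norm_real, Real.norm_of_nonneg (by positivity)]; linarith)
  have hB : ∀ w : ℂ, ‖w‖ = 1 → ‖∑' n, c n * w ^ n‖ ≤ M / (1 - x) := by
    intro w hw
    have hρw : ‖(ρ : ℂ) * w‖ = ρ := by
      rw [norm_mul, hw, mul_one, norm_real, Real.norm_of_nonneg hρ0]
    have hmem : (ρ : ℂ) * w ∈ ball (0 : ℂ) 1 := by rwa [mem_ball_zero_iff, hρw]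
    have hsum : ∑' n, c n * w ^ n = deriv f (ρ * w) := by
      rw [← (hb _ hmem).tsum_eq]
      exact tsum_congr fun n => by simp only [c]; ring
    have hbound := hM _ hmem
    rw [hρw, hρx] at hbound
    rw [hsum, le_div_iff₀ (by linarith), mul_comm]
    exact hbound
  calc ∑ n ∈ range N, ((n + 1) ^ 2 * ‖a (n + 1)‖ ^ 2) * x ^ n = ∑ n ∈ range N, ‖c n‖ ^ 2 :=
        sum_congr rfl fun n _ => by rw [hnorm, ← hρx]; ring
    _ ≤ (M / (1 - x)) ^ 2 := sum_range_norm_sq_le_of_norm_tsum_le hc hB N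
    _ = M ^ 2 / (1 - x) ^ 2 := div_pow _ _ _

theorem sum_range_mul_norm_sq_mul_pow_le
    (ha : ∀ z ∈ ball (0 : ℂ) 1, HasSum (fun n => a n * z ^ n) (f z))
    (hM : ∀ z ∈ ball (0 : ℂ) 1, (1 - ‖z‖ ^ 2) * ‖deriv f z‖ ≤ M)
    {r : ℝ} (hr0 : 0 ≤ r) (hr1 : r < 1) (N : ℕ) :
    ∑ n ∈ range N, (n + 1) * ‖a (n + 1)‖ ^ 2 * r ^ (n + 1) ≤ M ^ 2 * r / (1 - r) := by
  convert sum_range_mul_pow_succ_div_le hr0 hr1 fun x hx =>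
    sum_range_sq_mul_norm_sq_mul_pow_le ha hM hx.1 (hx.2.trans_lt hr1) N using 2 with n
  field_simp

theorem sq_sum_range_norm_mul_pow_le
    (ha : ∀ z ∈ ball (0 : ℂ) 1, HasSum (fun n => a n * z ^ n) (f z))
    (hM : ∀ z ∈ ball (0 : ℂ) 1, (1 - ‖z‖ ^ 2) * ‖deriv f z‖ ≤ M)
    {r : ℝ} (hr0 : 0 ≤ r) (hr1 : r < 1) (N : ℕ) :
    (∑ n ∈ range N, ‖a (n + 1)‖ * r ^ (n + 1)) ^ 2
      ≤ M ^ 2 * r / (1 - r) * -Real.log (1 - r) := by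
  have hlog : ∑ n ∈ range N, r ^ (n + 1) / (n + 1) ≤ -Real.log (1 - r) :=
    sum_le_hasSum _ (fun n _ => by positivity)
      (Real.hasSum_pow_div_log_of_abs_lt_one (by rwa [abs_of_nonneg hr0]))
  calc (∑ n ∈ range N, ‖a (n + 1)‖ * r ^ (n + 1)) ^ 2
      ≤ (∑ n ∈ range N, (n + 1) * ‖a (n + 1)‖ ^ 2 * r ^ (n + 1)) *
          ∑ n ∈ range N, r ^ (n + 1) / (n + 1) :=
        sum_sq_le_sum_mul_sum_of_sq_le_mul _ (fun n _ => by positivity) (fun n _ => by positivity)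
          fun n _ => le_of_eq (by field_simp)
    _ ≤ M ^ 2 * r / (1 - r) * -Real.log (1 - r) :=
        mul_le_mul (sum_range_mul_norm_sq_mul_pow_le ha hM hr0 hr1 N) hlog
          (sum_nonneg fun n _ => by positivity) (by have := sub_pos.2 hr1; positivity)

end BlochBound

theorem one_sub_add_mul_log_one_sub_nonneg {r R : ℝ} (hr0 : 0 ≤ r) (hr : r ≤ R) (hR1 : R < 1)
    (hroot : 1 - R + R * Real.log (1 - R) = 0) : 0 ≤ 1 - r + r * Real.log (1 - r) := by
  have hlog : Real.log (1 - R) ≤ Real.log (1 - r) :=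
    Real.log_le_log (by linarith) (by linarith)
  have hlogr : Real.log (1 - r) ≤ 0 := Real.log_nonpos (by linarith) (by linarith)
  nlinarith [mul_le_mul_of_nonneg_left hlog hr0, mul_le_mul_of_nonpos_right hr hlogr]

theorem bohr_stmt_17_general (a : ℕ → ℂ) (f : ℂ → ℂ)
    (ha : ∀ z ∈ ball (0:ℂ) 1, HasSum (fun n : ℕ => a n * z ^ n) (f z))
    (hbloch : ∀ z ∈ ball (0:ℂ) 1,
      ‖f 0‖ + (1 - (‖z‖)^2) * ‖deriv f z‖ ≤ 1)
    (R : ℝ) (hR1 : R < 1)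
    (hroot : 1 - R + R * Real.log (1 - R) = 0)
    (r : ℝ) (hr0 : 0 ≤ r) (hr : r ≤ R) :
    ∑' n : ℕ, ‖a n‖ * r ^ n ≤ 1 := by
  have hf0 : f 0 = a 0 := (ha 0 (mem_ball_self one_pos)).unique <| by
    simpa using hasSum_single (f := fun n => a n * (0 : ℂ) ^ n) 0 fun n hn => by simp [hn]
  have hM : ∀ z ∈ ball (0 : ℂ) 1, (1 - ‖z‖ ^ 2) * ‖deriv f z‖ ≤ 1 - ‖a 0‖ := fun z hz => by
    linarith [hf0 ▸ hbloch z hz]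
  have hM0 : 0 ≤ 1 - ‖a 0‖ :=
    (norm_nonneg _).trans (by simpa using hM 0 (mem_ball_self one_pos))
  have hr1 : r < 1 := hr.trans_lt hR1
  have htail : ∀ N, ∑ n ∈ range N, ‖a (n + 1)‖ * r ^ (n + 1) ≤ 1 - ‖a 0‖ := fun N => by
    refine le_of_sq_le_sq ?_ hM0
    calc (∑ n ∈ range N, ‖a (n + 1)‖ * r ^ (n + 1)) ^ 2
        ≤ (1 - ‖a 0‖) ^ 2 * r / (1 - r) * -Real.log (1 - r) :=
          sq_sum_range_norm_mul_pow_le ha hM hr0 hr1 N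
      _ ≤ (1 - ‖a 0‖) ^ 2 := by
          have := one_sub_add_mul_log_one_sub_nonneg hr0 hr hR1 hroot
          rw [div_mul_eq_mul_div, div_le_iff₀ (sub_pos.2 hr1)]
          nlinarith [sq_nonneg (1 - ‖a 0‖)]
  refine Real.tsum_le_of_sum_range_le (fun n => by positivity) fun N => ?_
  cases N with
  | zero => simp
  | succ N => rw [sum_range_succ']; linarith [htail N]

theorem bohr_stmt_17 (a : ℕ → ℂ) (f : ℂ → ℂ)
    (hf : AnalyticOn ℂ f (ball (0:ℂ) 1))
    (ha : ∀ z ∈ ball (0:ℂ) 1, HasSum (fun n : ℕ => a n * z ^ n) (f z))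
    (hbloch : ∀ z ∈ ball (0:ℂ) 1,
      ‖f 0‖ + (1 - (‖z‖)^2) * ‖deriv f z‖ ≤ 1)
    (R : ℝ) (hR0 : 0 < R) (hR1 : R < 1)
    (hroot : 1 - R + R * Real.log (1 - R) = 0)
    (r : ℝ) (hr0 : 0 ≤ r) (hr : r ≤ R) :
    ∑' n : ℕ, ‖a n‖ * r ^ n ≤ 1 :=
  bohr_stmt_17_general a f ha hbloch R hR1 hroot r hr0 hr
end

section
/- For the function f(z) = (3√3/4)(((z-a)/(1-az))² - a²) with a ∈ (0,1), one has f'(z) = (3√3/2)((z-a)/(1-az))·(1-a²)/(1-az)², the Bloch norm satisfies sup_{z∈𝔻}(1-|z|²)|f'(z)| = 1, and Σ_{n≥0} |a_n| rⁿ = (3√3/4)(((r-a)/(1-ar))² - a² + 4a(1-a²)r) whenever a ∈ (0, 1/√3) (all coefficients a_n for n ≥ 2 being positive). -/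
open Metric Complex

/-!
Write `f = (3√3/4)(φ² - a²)` with `φ z = (z - a)/(1 - a z)`. Since
`1 - |z|² = (|1 - a z|² - |z - a|²)/(1 - a²)`, the Bloch quantity `(1 - |z|²)|f'(z)|` equals
`(3√3/2) t (1 - t²)` with `t = |φ z|`, and the maximum of `t (1 - t²)` on `[0, 1]` is
`2/(3√3)`, attained at `t = 1/√3`. For `a < 1/√3` every coefficient `a_n`, `n ≥ 2`, is
nonnegative, so `∑ |a_n| rⁿ` is a linear-times-geometric series in `a r` with a closed form.
-/

noncomputable def blochExtremal (a : ℝ) (z : ℂ) : ℂ :=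
  ((3 * √3 / 4 : ℝ) : ℂ) * (((z - a) / (1 - a * z)) ^ 2 - (a : ℂ) ^ 2)

lemma one_sub_mul_ne_zero_of_norm_lt_one {a z : ℂ} (ha : ‖a‖ ≤ 1) (hz : ‖z‖ < 1) :
    1 - a * z ≠ 0 := by
  have hlt : ‖a * z‖ < 1 := by
    rw [norm_mul]
    exact (mul_le_of_le_one_left (norm_nonneg z) ha).trans_lt hz
  refine sub_ne_zero.mpr fun h => ?_
  rw [← h, norm_one] at hlt
  exact lt_irrefl 1 hlt

lemma hasDerivAt_moebius {a z : ℂ} (h : 1 - a * z ≠ 0) :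
    HasDerivAt (fun w => (w - a) / (1 - a * w)) ((1 - a ^ 2) / (1 - a * z) ^ 2) z := by
  have hnum : HasDerivAt (fun w : ℂ => w - a) 1 z := (hasDerivAt_id z).sub_const a
  have hden : HasDerivAt (fun w : ℂ => 1 - a * w) (-a) z := by
    simpa using ((hasDerivAt_id z).const_mul a).const_sub 1
  exact (hnum.fun_div hden h).congr_deriv (by ring)

lemma deriv_blochExtremal {a : ℝ} {z : ℂ} (h : 1 - a * z ≠ 0) :
    deriv (blochExtremal a) z = ((3 * √3 / 2 : ℝ) : ℂ) * ((z - a) / (1 - a * z)) *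
      ((1 - (a : ℂ) ^ 2) / (1 - a * z) ^ 2) := by
  have hf : HasDerivAt (blochExtremal a) _ z :=
    (((hasDerivAt_moebius h).fun_pow 2).sub_const ((a : ℂ) ^ 2)).const_mul _
  rw [hf.deriv]
  push_cast
  ring

lemma norm_one_sub_mul_sq_sub_norm_sub_sq (a : ℝ) (z : ℂ) :
    ‖1 - a * z‖ ^ 2 - ‖z - a‖ ^ 2 = (1 - a ^ 2) * (1 - ‖z‖ ^ 2) := by
  simp only [Complex.sq_norm, Complex.normSq_apply, Complex.sub_re, Complex.sub_im,
    Complex.mul_re, Complex.mul_im, Complex.ofReal_re, Complex.ofReal_im,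
    Complex.one_re, Complex.one_im]
  ring

lemma one_sub_sq_mul_norm_deriv_blochExtremal {a : ℝ} (ha : |a| ≤ 1) {z : ℂ} (hz : ‖z‖ < 1) :
    (1 - ‖z‖ ^ 2) * ‖deriv (blochExtremal a) z‖ =
      3 * √3 / 2 * (‖z - a‖ * (‖1 - a * z‖ ^ 2 - ‖z - a‖ ^ 2) / ‖1 - a * z‖ ^ 3) := by
  have hne : 1 - (a : ℂ) * z ≠ 0 :=
    one_sub_mul_ne_zero_of_norm_lt_one (by simpa using ha) hz
  have ha2 : 0 ≤ 1 - a ^ 2 := by nlinarith [abs_nonneg a, sq_abs a]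
  have hnorm : ‖(1 : ℂ) - (a : ℂ) ^ 2‖ = 1 - a ^ 2 := by
    rw [← ofReal_one, ← ofReal_pow, ← ofReal_sub, norm_real, Real.norm_of_nonneg ha2]
  rw [deriv_blochExtremal hne, norm_one_sub_mul_sq_sub_norm_sub_sq]
  simp only [norm_mul, norm_div, norm_pow, hnorm, norm_real, Real.norm_of_nonneg
    (by positivity : (0 : ℝ) ≤ 3 * √3 / 2)]
  have hm : ‖1 - (a : ℂ) * z‖ ≠ 0 := norm_ne_zero_iff.mpr hne
  field_simp

/-- The maximum of `t (1 - t²)` on `[0, 1]` is `2/(3√3)`, at `t = 1/√3`, in homogeneous form. -/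
lemma three_mul_sqrt_three_mul_le {s m : ℝ} (hs : 0 ≤ s) (hm : 0 ≤ m) :
    3 * √3 * (s * (m ^ 2 - s ^ 2)) ≤ 2 * m ^ 3 := by
  have h3 : √3 ^ 2 = 3 := Real.sq_sqrt (by norm_num)
  have hfac : 2 * m ^ 3 - 3 * √3 * (s * (m ^ 2 - s ^ 2)) =
      (√3 * s - m) ^ 2 * (√3 * s + 2 * m) := by
    linear_combination (-(√3 * s ^ 3)) * h3
  exact sub_nonneg.mp (hfac ▸ by positivity)

lemma one_sub_sq_mul_norm_deriv_blochExtremal_le {a : ℝ} (ha : |a| ≤ 1) {z : ℂ}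
    (hz : ‖z‖ < 1) : (1 - ‖z‖ ^ 2) * ‖deriv (blochExtremal a) z‖ ≤ 1 := by
  have hm : 0 < ‖1 - (a : ℂ) * z‖ :=
    norm_pos_iff.mpr (one_sub_mul_ne_zero_of_norm_lt_one (by simpa using ha) hz)
  rw [one_sub_sq_mul_norm_deriv_blochExtremal ha hz, ← mul_div_assoc, div_le_one (by positivity)]
  linarith [three_mul_sqrt_three_mul_le (norm_nonneg ((z : ℂ) - a)) hm.le]

lemma exists_one_sub_sq_mul_norm_deriv_blochExtremal_eq_one {a : ℝ} (ha : |a| < 1) :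
    ∃ z : ℂ, ‖z‖ < 1 ∧ (1 - ‖z‖ ^ 2) * ‖deriv (blochExtremal a) z‖ = 1 := by
  obtain ⟨ha₁, ha₂⟩ := abs_lt.mp ha
  have h3 : √3 ^ 2 = 3 := Real.sq_sqrt (by norm_num)
  have h31 : 1 < √3 := by nlinarith [Real.sqrt_nonneg 3]
  have hden : 0 < √3 + a := by linarith
  set s := (1 - a ^ 2) / (√3 + a) with hs_def
  have hs : 0 < s := div_pos (by nlinarith) hden
  -- the point of `(-1, 1)` with `|1 - a z₀| = √3 |z₀ - a|`
  set z₀ := (√3 * a + 1) / (√3 + a) with hz₀_def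
  have hz₀s : z₀ - a = s := by rw [hz₀_def, hs_def]; field_simp; ring
  have hz₀qs : 1 - a * z₀ = √3 * s := by rw [hz₀_def, hs_def]; field_simp; ring
  have hz₀ : |z₀| < 1 := by
    rw [abs_lt, hz₀_def, lt_div_iff₀ hden, div_lt_one hden]
    constructor <;> nlinarith
  refine ⟨z₀, by simpa using hz₀, ?_⟩
  rw [one_sub_sq_mul_norm_deriv_blochExtremal ha.le (by simpa using hz₀), ← ofReal_sub,
    ← ofReal_one, ← ofReal_mul, ← ofReal_sub, norm_real, norm_real, hz₀s, hz₀qs,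
    Real.norm_of_nonneg hs.le, Real.norm_of_nonneg (by positivity)]
  clear_value s
  field_simp
  linear_combination h3

lemma isLUB_blochExtremal {a : ℝ} (ha : |a| < 1) :
    IsLUB ((fun z : ℂ => (1 - ‖z‖ ^ 2) * ‖deriv (blochExtremal a) z‖) '' ball 0 1) 1 := by
  obtain ⟨z, hz, hz_eq⟩ := exists_one_sub_sq_mul_norm_deriv_blochExtremal_eq_one ha
  refine IsGreatest.isLUB ⟨⟨z, mem_ball_zero_iff.mpr hz, hz_eq⟩, ?_⟩
  rintro _ ⟨w, hw, rfl⟩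
  exact one_sub_sq_mul_norm_deriv_blochExtremal_le ha.le (mem_ball_zero_iff.mp hw)

lemma hasSum_linear_mul_geometric {𝕜 : Type*} [NormedField 𝕜] [CompleteSpace 𝕜] {x : 𝕜}
    (hx : ‖x‖ < 1) (b c : 𝕜) :
    HasSum (fun n : ℕ => (b * n + c) * x ^ n) (b * x / (1 - x) ^ 2 + c / (1 - x)) := by
  have h := ((hasSum_coe_mul_geometric_of_norm_lt_one hx).mul_left b).add
    ((hasSum_geometric_of_norm_lt_one hx).mul_left c)
  have hfun : (fun n : ℕ => (b * n + c) * x ^ n) = fun n : ℕ => b * (n * x ^ n) + c * x ^ n := by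
    ext n
    ring
  rw [hfun, mul_div_assoc, div_eq_mul_inv c]
  exact h

lemma tsum_norm_coeff_mul_pow_eq {a : ℝ} (ha0 : 0 ≤ a) (ha : 3 * a ^ 2 ≤ 1) {A : ℕ → ℂ}
    (hA0 : A 0 = 0)
    (hA1 : A 1 = ((3 * √3 / 4 : ℝ) : ℂ) * (-2 * (a : ℂ) * (1 - (a : ℂ) ^ 2)))
    (hAn : ∀ n : ℕ, 2 ≤ n → A n = ((3 * √3 / 4 : ℝ) : ℂ) * (1 - (a : ℂ) ^ 2) *
      ((n : ℂ) * (1 - (a : ℂ) ^ 2) - (1 + (a : ℂ) ^ 2)) * (a : ℂ) ^ (n - 2))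
    {r : ℝ} (hr0 : 0 ≤ r) (hr1 : r < 1) :
    ∑' n : ℕ, ‖A n‖ * r ^ n =
      3 * √3 / 4 * (((r - a) / (1 - a * r)) ^ 2 - a ^ 2 + 4 * a * (1 - a ^ 2) * r) := by
  set C := 3 * √3 / 4
  have hC0 : 0 ≤ C := by positivity
  have ha1 : 0 ≤ 1 - a ^ 2 := by nlinarith
  have har : a * r < 1 := by nlinarith
  have hx : ‖a * r‖ < 1 := by rwa [Real.norm_of_nonneg (by positivity)]
  have htail : ∀ n : ℕ, ‖A (n + 2)‖ * r ^ (n + 2) =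
      (C * (1 - a ^ 2) ^ 2 * r ^ 2 * n + C * (1 - a ^ 2) * (1 - 3 * a ^ 2) * r ^ 2) *
        (a * r) ^ n := by
    intro n
    have hcoeff : A (n + 2) =
        ((C * (1 - a ^ 2) * ((1 - a ^ 2) * n + (1 - 3 * a ^ 2)) * a ^ n : ℝ) : ℂ) := by
      rw [hAn (n + 2) (by omega), Nat.add_sub_cancel]
      push_cast
      ring
    have hnonneg : 0 ≤ C * (1 - a ^ 2) * ((1 - a ^ 2) * n + (1 - 3 * a ^ 2)) * a ^ n :=
      mul_nonneg (mul_nonneg (mul_nonneg hC0 ha1)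
        (add_nonneg (mul_nonneg ha1 n.cast_nonneg) (by linarith))) (pow_nonneg ha0 n)
    rw [hcoeff, norm_real, Real.norm_of_nonneg hnonneg]
    ring
  have hA1_norm : ‖A 1‖ = C * (2 * a * (1 - a ^ 2)) := by
    rw [hA1, show (C : ℂ) * (-2 * (a : ℂ) * (1 - (a : ℂ) ^ 2)) =
        ((-(C * (2 * a * (1 - a ^ 2))) : ℝ) : ℂ) by push_cast; ring,
      norm_real, norm_neg, Real.norm_of_nonneg (by positivity)]
  have hsum := hasSum_linear_mul_geometric hx (C * (1 - a ^ 2) ^ 2 * r ^ 2)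
    (C * (1 - a ^ 2) * (1 - 3 * a ^ 2) * r ^ 2)
  simp_rw [← htail] at hsum
  rw [hasSum_nat_add_iff (f := fun n => ‖A n‖ * r ^ n) 2] at hsum
  rw [hsum.tsum_eq, Finset.sum_range_succ, Finset.sum_range_one, hA0, hA1_norm, norm_zero]
  have hden : 1 - a * r ≠ 0 := by linarith
  field_simp
  ring

theorem bohr_stmt_19 (a : ℝ) (ha0 : 0 < a) (ha1 : a < 1)
    (f : ℂ → ℂ)
    (hf : ∀ z : ℂ, f z =
      ((3 * Real.sqrt 3 / 4 : ℝ) : ℂ) * (((z - (a:ℂ)) / (1 - (a:ℂ) * z)) ^ 2 - (a:ℂ) ^ 2))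
    (A : ℕ → ℂ)
    (hA0 : A 0 = 0)
    (hA1 : A 1 = ((3 * Real.sqrt 3 / 4 : ℝ) : ℂ) * (-2 * (a:ℂ) * (1 - (a:ℂ) ^ 2)))
    (hAn : ∀ n : ℕ, 2 ≤ n → A n =
      ((3 * Real.sqrt 3 / 4 : ℝ) : ℂ) * (1 - (a:ℂ) ^ 2) *
        (((n : ℂ)) * (1 - (a:ℂ) ^ 2) - (1 + (a:ℂ) ^ 2)) * (a:ℂ) ^ (n - 2)) :
    (∀ z ∈ ball (0:ℂ) 1, deriv f z =
      ((3 * Real.sqrt 3 / 2 : ℝ) : ℂ) * ((z - (a:ℂ)) / (1 - (a:ℂ) * z)) *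
        ((1 - (a:ℂ) ^ 2) / (1 - (a:ℂ) * z) ^ 2)) ∧
    IsLUB ((fun z : ℂ => (1 - (‖z‖)^2) * ‖deriv f z‖) ''
      ball (0:ℂ) 1) 1 ∧
    (a < 1 / Real.sqrt 3 →
      ∀ r : ℝ, 0 ≤ r → r < 1 →
        ∑' n : ℕ, ‖A n‖ * r ^ n =
          (3 * Real.sqrt 3 / 4) *
            (((r - a) / (1 - a * r)) ^ 2 - a ^ 2 + 4 * a * (1 - a ^ 2) * r)) := by
  obtain rfl : f = blochExtremal a := funext hf
  have ha : |a| < 1 := abs_lt.mpr ⟨by linarith, ha1⟩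
  refine ⟨fun z hz => deriv_blochExtremal ?_, isLUB_blochExtremal ha, fun ha3 r hr0 hr1 => ?_⟩
  · exact one_sub_mul_ne_zero_of_norm_lt_one (by simpa using ha.le) (mem_ball_zero_iff.mp hz)
  · have h3 : 3 * a ^ 2 ≤ 1 := by
      have h : a * √3 < 1 := (lt_div_iff₀ (by positivity)).mp ha3
      nlinarith [Real.sq_sqrt (show (0 : ℝ) ≤ 3 by norm_num), Real.sqrt_nonneg 3]
    exact tsum_norm_coeff_mul_pow_eq ha0.le h3 hA0 hA1 hAn hr0 hr1
end
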